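/- arXiv:1707.02638 — 6 statements merged into one kernel-verified Lean document; each statement's English description precedes it below -/
import Mathlib

section
/- Let G be a finite simple graph, k a positive integer, and let S and T be two vertex covers of G with S ∩ T = ∅, each of size at most k. Let Ḡ be the graph obtained from G by cliquifying S and then cliquifying T. Then the following are equivalent: (i) there exists a reconfiguration sequence from S to T in R_k(G); (ii) there exists a monotone reconfiguration sequence from S to T in R_k(G); (iii) Ḡ has a path decomposition of width at most k − 1. -/
/-!
Every edge of `G` joins `S` and `T`. For `Y ⊆ T` let `c Y = #Y + #{s ∈ S | s has a neighbour
outside Y}`, the size of the smallest cover meeting `T` in `Y`; `c` is submodular.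

A reconfiguration sequence `Q` gives a crusade: sets `∅ = D 0, …, D n = T` inside `T`, each adding
at most one vertex to the previous one, with `c (D r) < k` before every step (take
`D r = T ∩ Q r ∩ Q (r + 1)`, whose cost is at most the size of the smaller of two consecutive covers).
A crusade minimising `(∑ c (D r), ∑ #(D r))` lexicographically is increasing, since otherwise
replacing `D r` by `D r ∩ D (r + 1)` or `D (r + 1)` by `D r ∪ D (r + 1)` improves it. An increasing
crusade yields the path decomposition with bags `S` and `D (r + 1) ∪ {s ∈ S | s has a neighbour
outside D r}`, each of size at most `c (D r) + 1 ≤ k`.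

Conversely, in a path decomposition of the cliquified graph some bag `α` contains `S` and, after
reversing the decomposition, some later bag `β` contains `T`. Removing each vertex of `S` at its last
bag and adding each vertex of `T` at its first bag, both clamped to `[α, β]`, keeps every
intermediate set a vertex cover contained in a bag, and switches every vertex once.
-/

/-- A set of vertices is a vertex cover of `G` if it contains at least one
endpoint of every edge. -/
def IsVC {α : Type*} (G : SimpleGraph α) (S : Finset α) : Prop :=
  ∀ ⦃u v : α⦄, G.Adj u v → u ∈ S ∨ v ∈ S

/-- A reconfiguration sequence in `R_k(G)` from `S` to `T`: a sequence
`Q 0 = S, …, Q t = T` of vertex covers of `G`, each of size at most `k`,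
such that consecutive sets have symmetric difference of size exactly one. -/
def ReconfSeq {α : Type*} [DecidableEq α] (G : SimpleGraph α) (k : ℕ) (S T : Finset α)
    (t : ℕ) (Q : ℕ → Finset α) : Prop :=
  Q 0 = S ∧ Q t = T ∧ (∀ i ≤ t, IsVC G (Q i) ∧ (Q i).card ≤ k) ∧
    ∀ i < t, (symmDiff (Q i) (Q (i + 1))).card = 1

/-- A reconfiguration sequence is monotone if every vertex changes its
membership at most once over the whole sequence. -/
def MonotoneSeq {α : Type*} [DecidableEq α] (t : ℕ) (Q : ℕ → Finset α) : Prop :=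
  ∀ v : α, ((Finset.range t).filter (fun i => v ∈ symmDiff (Q i) (Q (i + 1)))).card ≤ 1

/-- Cliquifying a vertex subset `S` of `G`: add all missing edges between
vertices of `S`. -/
def cliquify {α : Type*} [DecidableEq α] (G : SimpleGraph α) (S : Finset α) :
    SimpleGraph α where
  Adj u v := (G.Adj u v ∨ (u ∈ S ∧ v ∈ S)) ∧ u ≠ v
  symm := by
    constructor
    intro u v h
    exact ⟨h.1.elim (fun h' => Or.inl h'.symm) (fun h' => Or.inr ⟨h'.2, h'.1⟩), h.2.symm⟩
  loopless := by constructor; intro u h; exact h.2 rfl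

/-- `B 0, …, B (p-1)` is a path decomposition of `G`. -/
structure PathDecomp {α : Type*} (G : SimpleGraph α) (p : ℕ) (B : ℕ → Finset α) : Prop where
  /-- every vertex lies in some bag -/
  mem_bag : ∀ v : α, ∃ i, i < p ∧ v ∈ B i
  /-- every edge is contained in some bag -/
  edge_bag : ∀ ⦃u v : α⦄, G.Adj u v → ∃ i, i < p ∧ u ∈ B i ∧ v ∈ B i
  /-- the bags containing a given vertex form a contiguous interval -/
  interval : ∀ (v : α) (i j l : ℕ), i ≤ j → j ≤ l → l < p → v ∈ B i → v ∈ B l → v ∈ B j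


open Finset

section Crusade

variable {α : Type*} [DecidableEq α]

lemma sum_update_add {β : Type*} (g : β → ℕ) (D : ℕ → β) {s : Finset ℕ} {j : ℕ} (hj : j ∈ s)
    (X : β) : ∑ i ∈ s, g (Function.update D j X i) + g (D j) = ∑ i ∈ s, g (D i) + g X := by
  rw [← sum_erase_add _ _ hj, ← sum_erase_add _ _ hj, Function.update_self,
    sum_congr rfl fun i hi => by rw [Function.update_of_ne (ne_of_mem_erase hi)]]
  ring

structure IsCrusade (f : Finset α → ℕ) (k : ℕ) (T : Finset α) (n : ℕ) (D : ℕ → Finset α) :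
    Prop where
  zero : D 0 = ∅
  last : D n = T
  subset : ∀ r < n, D r ⊆ T
  card_sdiff : ∀ r < n, #(D (r + 1) \ D r) ≤ 1
  lt : ∀ r < n, f (D r) < k

namespace IsCrusade

variable {f : Finset α → ℕ} {k : ℕ} {T : Finset α} {n : ℕ} {D D' : ℕ → Finset α}

lemma of_sdiff_subset (hD : IsCrusade f k T n D) (hzero : D' 0 = ∅) (hlast : D' n = T)
    (hsub : ∀ r < n, D' r ⊆ T) (hf : ∀ r < n, f (D' r) ≤ f (D r))
    (hstep : ∀ r < n, D' (r + 1) \ D' r ⊆ D (r + 1) \ D r) : IsCrusade f k T n D' where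
  zero := hzero
  last := hlast
  subset := hsub
  card_sdiff r hr := (card_le_card (hstep r hr)).trans (hD.card_sdiff r hr)
  lt r hr := (hf r hr).trans_lt (hD.lt r hr)

lemma update_inter (hD : IsCrusade f k T n D) {r : ℕ} (hr : r < n)
    (hf : f (D r ∩ D (r + 1)) ≤ f (D r)) :
    IsCrusade f k T n (Function.update D r (D r ∩ D (r + 1))) := by
  have hle : ∀ i, Function.update D r (D r ∩ D (r + 1)) i ⊆ D i := by
    intro i
    rcases eq_or_ne i r with rfl | hi
    · simp [inter_subset_left]
    · simp [Function.update_of_ne hi]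
  refine hD.of_sdiff_subset (subset_empty.mp (hD.zero ▸ hle 0)) ?_
    (fun i hi => (hle i).trans (hD.subset i hi)) (fun i _ => ?_) (fun i _ x => ?_)
  · rw [Function.update_of_ne hr.ne', hD.last]
  · rcases eq_or_ne i r with rfl | hi
    · simpa using hf
    · simp [Function.update_of_ne hi]
  · simp only [mem_sdiff, Function.update_apply]
    split_ifs <;> simp_all

lemma update_union (hD : IsCrusade f k T n D) {r : ℕ} (hr : r + 1 < n)
    (hf : f (D r ∪ D (r + 1)) < f (D (r + 1))) :
    IsCrusade f k T n (Function.update D (r + 1) (D r ∪ D (r + 1))) := by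
  refine hD.of_sdiff_subset ?_ ?_ (fun i hi => ?_) (fun i _ => ?_) (fun i _ x => ?_)
  · rw [Function.update_of_ne (by omega), hD.zero]
  · rw [Function.update_of_ne (by omega), hD.last]
  · rcases eq_or_ne i (r + 1) with rfl | hne
    · simpa using union_subset (hD.subset r (by omega)) (hD.subset (r + 1) hr)
    · simpa [Function.update_of_ne hne] using hD.subset i hi
  · rcases eq_or_ne i (r + 1) with rfl | hi
    · simpa using hf.le
    · simp [Function.update_of_ne hi]
  · simp only [mem_sdiff, Function.update_apply]
    split_ifs with hi hi' hi'
    · omega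
    · obtain rfl : i = r := by omega
      simp only [mem_union]; tauto
    · subst hi'
      simp only [mem_union]; tauto
    · exact id

theorem exists_monotone (hf : ∀ X Y, f (X ∪ Y) + f (X ∩ Y) ≤ f X + f Y)
    (hD : IsCrusade f k T n D) :
    ∃ D', IsCrusade f k T n D' ∧ ∀ r < n, D' r ⊆ D' (r + 1) := by
  let μ : (ℕ → Finset α) → ℕ ×ₗ ℕ := fun D =>
    toLex (∑ r ∈ range (n + 1), f (D r), ∑ r ∈ range (n + 1), #(D r))
  obtain ⟨D, hD, hmin⟩ := (InvImage.wf μ wellFounded_lt).has_min {D | IsCrusade f k T n D} ⟨D, hD⟩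
  refine ⟨D, hD, fun r hr => ?_⟩
  by_contra hnot
  have hr' : r ∈ range (n + 1) := mem_range.mpr (by omega)
  by_cases hinter : f (D r ∩ D (r + 1)) ≤ f (D r)
  · refine hmin _ (hD.update_inter hr hinter) (Prod.Lex.toLex_lt_toLex.mpr ?_)
    have hcard : #(D r ∩ D (r + 1)) < #(D r) :=
      card_lt_card (ssubset_of_subset_of_ne inter_subset_left fun h => hnot (h ▸ inter_subset_right))
    have := sum_update_add f D hr' (D r ∩ D (r + 1))
    have := sum_update_add card D hr' (D r ∩ D (r + 1))
    omega
  · have hr1 : r + 1 < n := by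
      by_contra h
      exact hnot (by rw [show r + 1 = n by omega, hD.last]; exact hD.subset r hr)
    have hunion : f (D r ∪ D (r + 1)) < f (D (r + 1)) := by
      have := hf (D r) (D (r + 1)); omega
    refine hmin _ (hD.update_union hr1 hunion) (Prod.Lex.toLex_lt_toLex.mpr ?_)
    have := sum_update_add f D (mem_range.mpr (by omega) : r + 1 ∈ range (n + 1)) (D r ∪ D (r + 1))
    omega

end IsCrusade

end Crusade

section Cover

variable {V : Type*} {G : SimpleGraph V} {S T : Finset V}

lemma IsVC.adj_between (hS : IsVC G S) (hT : IsVC G T) (hST : Disjoint S T) {u v : V}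
    (h : G.Adj u v) : u ∈ S ∧ v ∈ T ∨ u ∈ T ∧ v ∈ S := by
  have := disjoint_left.mp hST
  rcases hS h with hu | hv <;> rcases hT h with hu' | hv' <;> tauto

open Classical in
noncomputable def blocked (G : SimpleGraph V) (S Y : Finset V) : Finset V :=
  {s ∈ S | ∃ u ∉ Y, G.Adj s u}

lemma mem_blocked {Y : Finset V} {s : V} : s ∈ blocked G S Y ↔ s ∈ S ∧ ∃ u ∉ Y, G.Adj s u := by
  classical
  simp [blocked]

lemma blocked_subset (Y : Finset V) : blocked G S Y ⊆ S := fun _ hs => (mem_blocked.mp hs).1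

lemma blocked_anti {X Y : Finset V} (h : X ⊆ Y) : blocked G S Y ⊆ blocked G S X := by
  intro s hs
  obtain ⟨hs, u, hu, hadj⟩ := mem_blocked.mp hs
  exact mem_blocked.mpr ⟨hs, u, fun hu' => hu (h hu'), hadj⟩

variable [DecidableEq V]

lemma adj_cliquify_cliquify {u v : V} :
    (cliquify (cliquify G S) T).Adj u v ↔
      u ≠ v ∧ (G.Adj u v ∨ u ∈ S ∧ v ∈ S ∨ u ∈ T ∧ v ∈ T) := by
  simp only [cliquify]
  tauto

lemma blocked_inter (X Y : Finset V) : blocked G S (X ∩ Y) = blocked G S X ∪ blocked G S Y := by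
  ext s
  simp only [mem_union, mem_blocked, mem_inter, not_and_or]
  aesop

/-- When `S` and `T` are disjoint vertex covers and `Y ⊆ T`, this is the size of the smallest
vertex cover meeting `T` exactly in `Y`. -/
noncomputable def coverCost (G : SimpleGraph V) (S Y : Finset V) : ℕ :=
  #Y + #(blocked G S Y)

lemma coverCost_union_add_inter (X Y : Finset V) :
    coverCost G S (X ∪ Y) + coverCost G S (X ∩ Y) ≤ coverCost G S X + coverCost G S Y := by
  have hunion : blocked G S (X ∪ Y) ⊆ blocked G S X ∩ blocked G S Y :=
    subset_inter (blocked_anti subset_union_left) (blocked_anti subset_union_right)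
  have := card_le_card hunion
  have := card_union_add_card_inter X Y
  have := card_union_add_card_inter (blocked G S X) (blocked G S Y)
  unfold coverCost
  rw [blocked_inter]
  omega

lemma coverCost_inter_le_card (hT : IsVC G T) (hST : Disjoint S T) {C : Finset V}
    (hC : IsVC G C) : coverCost G S (T ∩ C) ≤ #C := by
  have hblocked : blocked G S (T ∩ C) ⊆ C := by
    intro s hs
    obtain ⟨hs, u, hu, hadj⟩ := mem_blocked.mp hs
    have huT : u ∈ T := (hT hadj).resolve_left (disjoint_left.mp hST hs)
    exact (hC hadj).resolve_right fun huC => hu (mem_inter.mpr ⟨huT, huC⟩)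
  have hdisj : Disjoint (T ∩ C) (blocked G S (T ∩ C)) :=
    disjoint_of_subset_left inter_subset_left
      (disjoint_of_subset_right (blocked_subset _) hST.symm)
  unfold coverCost
  rw [← card_union_of_disjoint hdisj]
  exact card_le_card (union_subset inter_subset_right hblocked)

end Cover

section Reconfiguration

variable {V : Type*} [DecidableEq V] {G : SimpleGraph V} {k : ℕ} {S T : Finset V}

lemma ssubset_or_ssubset_of_card_symmDiff_eq_one {A B : Finset V} (h : #(symmDiff A B) = 1) :
    A ⊂ B ∨ B ⊂ A := by
  obtain ⟨y, hy⟩ := card_eq_one.mp h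
  have hmem : ∀ z, (z ∈ A ∧ z ∉ B ∨ z ∈ B ∧ z ∉ A) ↔ z = y := fun z => by
    rw [← mem_symmDiff, hy, mem_singleton]
  by_cases hyA : y ∈ A
  · right
    refine Finset.ssubset_iff_subset_ne.mpr ⟨fun z hz => ?_, fun hBA => ?_⟩
    · by_contra hzA
      exact hzA ((hmem z).mp (Or.inr ⟨hz, hzA⟩) ▸ hyA)
    · have := (hmem y).mpr rfl
      simp_all
  · left
    refine Finset.ssubset_iff_subset_ne.mpr ⟨fun z hz => ?_, fun hAB => ?_⟩
    · by_contra hzB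
      exact hyA ((hmem z).mp (Or.inl ⟨hz, hzB⟩) ▸ hz)
    · have := (hmem y).mpr rfl
      simp_all

lemma isVC_inter_and_card_lt {A B : Finset V} (hA : IsVC G A) (hB : IsVC G B) (hAk : #A ≤ k)
    (hBk : #B ≤ k) (h : #(symmDiff A B) = 1) : IsVC G (A ∩ B) ∧ #(A ∩ B) < k := by
  rcases ssubset_or_ssubset_of_card_symmDiff_eq_one h with hAB | hBA
  · rw [inter_eq_left.mpr hAB.subset]
    exact ⟨hA, (card_lt_card hAB).trans_le hBk⟩
  · rw [inter_eq_right.mpr hBA.subset]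
    exact ⟨hB, (card_lt_card hBA).trans_le hAk⟩

theorem ReconfSeq.exists_isCrusade (hT : IsVC G T) (hST : Disjoint S T) {t : ℕ}
    {Q : ℕ → Finset V} (hQ : ReconfSeq G k S T t Q) :
    ∃ n D, IsCrusade (coverCost G S) k T n D := by
  obtain ⟨hQ0, hQt, hQcov, hQstep⟩ := hQ
  refine ⟨t, fun r => T ∩ (Q r ∩ Q (min (r + 1) t)), ⟨?_, ?_, ?_, fun r hr => ?_, fun r hr => ?_⟩⟩
  · simp [hQ0, ← inter_assoc, disjoint_iff_inter_eq_empty.mp hST.symm]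
  · simp [hQt]
  · exact fun r _ => inter_subset_left
  · refine (card_le_card fun x hx => ?_).trans (hQstep r hr).le
    simp only [min_eq_left (Nat.succ_le_of_lt hr), mem_sdiff, mem_inter] at hx
    exact mem_symmDiff.mpr (Or.inr ⟨hx.1.2.1, fun h => hx.2 ⟨hx.1.1, h, hx.1.2.1⟩⟩)
  · obtain ⟨hcov, hlt⟩ := isVC_inter_and_card_lt (hQcov r hr.le).1 (hQcov (r + 1) hr).1
      (hQcov r hr.le).2 (hQcov (r + 1) hr).2 (hQstep r hr)
    rw [min_eq_left (Nat.succ_le_of_lt hr)]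
    exact (coverCost_inter_le_card hT hST hcov).trans_lt hlt

end Reconfiguration

namespace PathDecomp

variable {V : Type*} {H : SimpleGraph V} {p : ℕ} {B : ℕ → Finset V}

lemma reverse (hB : PathDecomp H p B) : PathDecomp H p (fun i => B (p - 1 - i)) where
  mem_bag v := by
    obtain ⟨i, hi, hv⟩ := hB.mem_bag v
    exact ⟨p - 1 - i, by omega, by rwa [show p - 1 - (p - 1 - i) = i by omega]⟩
  edge_bag u v h := by
    obtain ⟨i, hi, hu, hv⟩ := hB.edge_bag h
    exact ⟨p - 1 - i, by omega, by rwa [show p - 1 - (p - 1 - i) = i by omega], by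
      rwa [show p - 1 - (p - 1 - i) = i by omega]⟩
  interval v i j l hij hjl hlp hi hl :=
    hB.interval v (p - 1 - l) (p - 1 - j) (p - 1 - i) (by omega) (by omega) (by omega) hl hi

variable [DecidableEq V] (hB : PathDecomp H p B)
include hB

noncomputable def first (v : V) : ℕ := Nat.find (hB.mem_bag v)

noncomputable def last (_ : PathDecomp H p B) (v : V) : ℕ := Nat.findGreatest (v ∈ B ·) (p - 1)

lemma first_lt (v : V) : hB.first v < p := (Nat.find_spec (hB.mem_bag v)).1

lemma mem_first (v : V) : v ∈ B (hB.first v) := (Nat.find_spec (hB.mem_bag v)).2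

lemma first_le {v : V} {i : ℕ} (hi : i < p) (hv : v ∈ B i) : hB.first v ≤ i :=
  Nat.find_min' (hB.mem_bag v) ⟨hi, hv⟩

lemma le_last {v : V} {i : ℕ} (hi : i < p) (hv : v ∈ B i) : i ≤ hB.last v :=
  Nat.le_findGreatest (by omega) hv

lemma last_lt (v : V) : hB.last v < p :=
  (Nat.findGreatest_le _).trans_lt (by have := hB.first_lt v; omega)

lemma mem_last (v : V) : v ∈ B (hB.last v) :=
  Nat.findGreatest_spec (P := (v ∈ B ·)) (by have := hB.first_lt v; omega) (hB.mem_first v)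

lemma exists_superset_of_isClique {W : Finset V} (hp : 0 < p)
    (hW : ∀ u ∈ W, ∀ v ∈ W, u ≠ v → H.Adj u v) : ∃ i < p, W ⊆ B i := by
  rcases W.eq_empty_or_nonempty with rfl | hne
  · exact ⟨0, hp, empty_subset _⟩
  obtain ⟨w, hw, hmax⟩ := exists_max_image W hB.first hne
  refine ⟨hB.first w, hB.first_lt w, fun u hu => ?_⟩
  rcases eq_or_ne u w with rfl | huw
  · exact hB.mem_first u
  obtain ⟨l, hl, hul, hwl⟩ := hB.edge_bag (hW u hu w hw huw)
  exact hB.interval u _ _ l (hmax u hu) (hB.first_le hl hwl) hl (hB.mem_first u) hul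

end PathDecomp

/-- The vertices outside `W`, isolated by `hBW` and `hedge`, get a bag of their own. -/
theorem exists_pathDecomp_of_partial {V : Type*} [Fintype V] [DecidableEq V]
    {H : SimpleGraph V} {W : Finset V} {k p : ℕ} {B : ℕ → Finset V} (hk : 0 < k)
    (hBW : ∀ i < p, B i ⊆ W)
    (hmem : ∀ v ∈ W, ∃ i < p, v ∈ B i)
    (hedge : ∀ ⦃u v⦄, H.Adj u v → ∃ i < p, u ∈ B i ∧ v ∈ B i)
    (hinterval : ∀ (v : V) (i j l : ℕ), i ≤ j → j ≤ l → l < p → v ∈ B i → v ∈ B l → v ∈ B j)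
    (hwidth : ∀ i < p, #(B i) ≤ k) :
    ∃ p B, PathDecomp H p B ∧ ∀ i < p, #(B i) ≤ k := by
  let e := Fintype.equivFin V
  let B' : ℕ → Finset V := fun i => if i < p then B i else ({v | v ∉ W ∧ p + e v = i} : Finset V)
  have hmem' : ∀ v i, v ∈ B' i ↔ i < p ∧ v ∈ B i ∨ p ≤ i ∧ v ∉ W ∧ p + e v = i := by
    intro v i
    by_cases hi : i < p
    · simp [B', hi]
    · simp only [B', hi, if_false, mem_filter, mem_univ, true_and, false_and, false_or]
      exact ⟨fun h => ⟨by omega, h⟩, fun h => h.2⟩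
  refine ⟨p + Fintype.card V, B', ⟨fun v => ?_, fun u v h => ?_, ?_⟩, fun i hi => ?_⟩
  · by_cases hv : v ∈ W
    · obtain ⟨i, hi, hvi⟩ := hmem v hv
      exact ⟨i, by omega, (hmem' v i).mpr (Or.inl ⟨hi, hvi⟩)⟩
    · exact ⟨p + e v, by have := (e v).isLt; omega, (hmem' v _).mpr (Or.inr ⟨by omega, hv, rfl⟩)⟩
  · obtain ⟨i, hi, hu, hv⟩ := hedge h
    exact ⟨i, by omega, (hmem' u i).mpr (Or.inl ⟨hi, hu⟩), (hmem' v i).mpr (Or.inl ⟨hi, hv⟩)⟩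
  · intro v i j l hij hjl _ hvi hvl
    rw [hmem'] at hvi hvl ⊢
    rcases hvi with ⟨hi, hvi⟩ | ⟨hi, hvW, rfl⟩ <;> rcases hvl with ⟨hl, hvl⟩ | ⟨hl, hvW', hl'⟩
    · exact Or.inl ⟨by omega, hinterval v i j l hij hjl hl hvi hvl⟩
    · exact absurd (hBW i hi hvi) hvW'
    · omega
    · exact Or.inr ⟨by omega, hvW, by omega⟩
  · by_cases hip : i < p
    · simpa [B', hip] using hwidth i hip
    · refine (card_le_one.mpr fun a ha b hb => ?_).trans hk
      simp only [B', hip, if_false, mem_filter, mem_univ, true_and] at ha hb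
      exact e.injective (Fin.ext (by omega))

section Decomposition

variable {V : Type*} [DecidableEq V] {G : SimpleGraph V} {k n : ℕ} {S T : Finset V}
  {D : ℕ → Finset V}

lemma subset_of_le_of_subset_succ {α : Type*} {D : ℕ → Finset α} (hmono : ∀ r < n, D r ⊆ D (r + 1))
    {i j : ℕ} (hij : i ≤ j) (hjn : j ≤ n) : D i ⊆ D j := by
  induction j, hij using Nat.le_induction with
  | base => exact Subset.rfl
  | succ j _ ih => exact (ih (by omega)).trans (hmono j (by omega))

noncomputable def crusadeBag (G : SimpleGraph V) (S : Finset V) (D : ℕ → Finset V) (i : ℕ) :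
    Finset V :=
  if i = 0 then S else D i ∪ blocked G S (D (i - 1))

lemma mem_crusadeBag_of_notMem {v : V} (hv : v ∉ S) {i : ℕ} :
    v ∈ crusadeBag G S D i ↔ i ≠ 0 ∧ v ∈ D i := by
  unfold crusadeBag
  split_ifs with hi
  · simp [hi, hv]
  · simp [hi, mem_blocked, hv]

lemma mem_crusadeBag_of_mem {v : V} (hv : v ∈ S) {i : ℕ} (hvD : v ∉ D i) :
    v ∈ crusadeBag G S D i ↔ i = 0 ∨ ∃ u ∉ D (i - 1), G.Adj v u := by
  unfold crusadeBag
  split_ifs with hi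
  · simp [hi, hv]
  · simp [hi, hvD, mem_blocked, hv]

namespace IsCrusade

variable (hD : IsCrusade (coverCost G S) k T n D)
include hD

lemma card_crusadeBag_le (hSk : #S ≤ k) {i : ℕ} (hi : i < n + 1) :
    #(crusadeBag G S D i) ≤ k := by
  unfold crusadeBag
  split_ifs with h0
  · exact hSk
  obtain ⟨r, rfl⟩ : ∃ r, i = r + 1 := ⟨i - 1, by omega⟩
  have hstep := hD.card_sdiff r (by omega)
  have hcost := hD.lt r (by omega)
  have := card_union_le (D (r + 1)) (blocked G S (D r))
  have := card_le_card_sdiff_add_card (s := D (r + 1)) (t := D r)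
  unfold coverCost at hcost
  simp only [add_tsub_cancel_right]
  omega

/-- An edge `sτ` lies in the bag where `τ` first enters the crusade. -/
lemma exists_crusadeBag_of_adj (hST : Disjoint S T) {s τ : V} (hs : s ∈ S) (hτ : τ ∈ T)
    (hsD : ∀ i ≤ n, s ∉ D i) (hadj : G.Adj s τ) :
    ∃ i < n + 1, s ∈ crusadeBag G S D i ∧ τ ∈ crusadeBag G S D i := by
  have hex : ∃ j, τ ∈ D j := ⟨n, hD.last ▸ hτ⟩
  have hj : τ ∈ D (Nat.find hex) := Nat.find_spec hex
  have hjn : Nat.find hex ≤ n := Nat.find_min' hex (hD.last ▸ hτ)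
  have hj0 : Nat.find hex ≠ 0 := fun h => by simp [h, hD.zero] at hj
  have hprev : τ ∉ D (Nat.find hex - 1) := Nat.find_min hex (by omega)
  exact ⟨Nat.find hex, by omega,
    (mem_crusadeBag_of_mem hs (hsD _ hjn)).mpr (Or.inr ⟨τ, hprev, hadj⟩),
    (mem_crusadeBag_of_notMem (disjoint_right.mp hST hτ)).mpr ⟨hj0, hj⟩⟩

theorem exists_pathDecomp [Fintype V] (hS : IsVC G S) (hT : IsVC G T) (hST : Disjoint S T)
    (hk : 0 < k) (hSk : #S ≤ k) (hmono : ∀ r < n, D r ⊆ D (r + 1)) :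
    ∃ p B, PathDecomp (cliquify (cliquify G S) T) p B ∧ ∀ i < p, #(B i) ≤ k := by
  have hDT : ∀ i ≤ n, D i ⊆ T := fun i hi =>
    hD.last ▸ subset_of_le_of_subset_succ hmono hi le_rfl
  have hSD : ∀ v ∈ S, ∀ i ≤ n, v ∉ D i := fun v hv i hi h =>
    disjoint_left.mp hST hv (hDT i hi h)
  have hTbag : ∀ τ ∈ T, τ ∈ crusadeBag G S D n := by
    intro τ hτ
    refine (mem_crusadeBag_of_notMem (disjoint_right.mp hST hτ)).mpr ⟨fun hn => ?_, hD.last ▸ hτ⟩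
    simp [← hD.last, hn, hD.zero] at hτ
  refine exists_pathDecomp_of_partial hk (W := S ∪ T) (fun i hi => ?_) (fun v hv => ?_)
    (fun u v h => ?_) (fun v i j l hij hjl hl hvi hvl => ?_)
    (fun i hi => hD.card_crusadeBag_le hSk hi)
  · unfold crusadeBag
    split_ifs
    · exact subset_union_left
    · exact union_subset ((hDT i (by omega)).trans subset_union_right)
        ((blocked_subset _).trans subset_union_left)
  · rcases mem_union.mp hv with hv | hv
    · exact ⟨0, by omega, by simp [crusadeBag, hv]⟩
    · exact ⟨n, by omega, hTbag v hv⟩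
  · obtain ⟨-, hG | ⟨hu, hv⟩ | ⟨hu, hv⟩⟩ := adj_cliquify_cliquify.mp h
    · rcases hS.adj_between hT hST hG with ⟨hu, hv⟩ | ⟨hu, hv⟩
      · exact hD.exists_crusadeBag_of_adj hST hu hv (hSD u hu) hG
      · obtain ⟨i, hi, hvi, hui⟩ := hD.exists_crusadeBag_of_adj hST hv hu (hSD v hv) hG.symm
        exact ⟨i, hi, hui, hvi⟩
    · exact ⟨0, by omega, by simp [crusadeBag, hu, hv]⟩
    · exact ⟨n, by omega, hTbag u hu, hTbag v hv⟩
  · by_cases hvS : v ∈ S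
    · rw [mem_crusadeBag_of_mem hvS (hSD v hvS l (by omega))] at hvl
      rw [mem_crusadeBag_of_mem hvS (hSD v hvS j (by omega))]
      rcases hvl with hl0 | ⟨u, hu, hadj⟩
      · exact Or.inl (by omega)
      · refine (eq_or_ne j 0).imp id fun hj0 => ⟨u, fun huj => hu ?_, hadj⟩
        exact subset_of_le_of_subset_succ hmono (by omega) (by omega) huj
    · rw [mem_crusadeBag_of_notMem hvS] at hvi ⊢
      exact ⟨by omega, subset_of_le_of_subset_succ hmono hij (by omega) hvi.2⟩

end IsCrusade

end Decomposition

section Schedule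

variable {V : Type*} [DecidableEq V] {G : SimpleGraph V} {k : ℕ} {S T : Finset V}

lemma exists_nodup_toFinset_eq_pairwise {α : Type*} [DecidableEq α] (W : Finset α)
    (κ : α → ℕ) : ∃ l : List α, l.Nodup ∧ l.toFinset = W ∧ l.Pairwise (κ · ≤ κ ·) := by
  have hperm := List.mergeSort_perm W.toList (fun a b => decide (κ a ≤ κ b))
  refine ⟨_, hperm.nodup_iff.mpr W.nodup_toList,
    (List.toFinset_eq_of_perm _ _ hperm).trans W.toList_toFinset, ?_⟩
  refine (List.pairwise_mergeSort (fun a b c hab hbc => ?_) (fun a b => ?_) _).imp ?_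
  · simp only [decide_eq_true_eq] at hab hbc ⊢; omega
  · simp only [Bool.or_eq_true, decide_eq_true_eq]; omega
  · simp

lemma symmDiff_take_succ {l : List V} (hl : l.Nodup) {i : ℕ} (hi : i < l.length) :
    symmDiff (symmDiff S (l.take i).toFinset) (symmDiff S (l.take (i + 1)).toFinset) = {l[i]} := by
  have htake : l.take (i + 1) = l.take i ++ [l[i]] := by
    rw [List.take_add_one, List.getElem?_eq_getElem hi]; rfl
  have hnot : l[i] ∉ l.take i := by
    have := hl.sublist (List.take_sublist (i + 1) l)
    rw [htake, List.nodup_append] at this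
    exact fun h => this.2.2 _ h _ (List.mem_singleton_self _) rfl
  rw [symmDiff_symmDiff_symmDiff_comm, symmDiff_self, bot_symmDiff, htake, List.toFinset_append]
  ext x
  simp only [mem_symmDiff, mem_union, List.mem_toFinset, List.toFinset_cons, List.toFinset_nil,
    insert_empty_eq, mem_singleton]
  constructor
  · tauto
  · rintro rfl; tauto

theorem exists_monotone_reconfSeq_of_list (hST : Disjoint S T) {l : List V} (hl : l.Nodup)
    (hlST : l.toFinset = S ∪ T)
    (hcov : ∀ i, IsVC G (symmDiff S (l.take i).toFinset) ∧ #(symmDiff S (l.take i).toFinset) ≤ k) :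
    ∃ t Q, ReconfSeq G k S T t Q ∧ MonotoneSeq t Q := by
  refine ⟨l.length, fun i => symmDiff S (l.take i).toFinset,
    ⟨by simp, ?_, fun i _ => hcov i, fun i hi => by rw [symmDiff_take_succ hl hi, card_singleton]⟩,
    fun v => card_le_one.mpr fun a ha b hb => ?_⟩
  · ext x
    have := @disjoint_left.mp hST x
    simp only [List.take_length, hlST, mem_symmDiff, mem_union]
    tauto
  · simp only [mem_filter, mem_range] at ha hb
    rw [symmDiff_take_succ hl ha.1, mem_singleton] at ha
    rw [symmDiff_take_succ hl hb.1, mem_singleton] at hb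
    exact (hl.getElem_inj_iff (hi := ha.1) (hj := hb.1)).mp (ha.2.symm.trans hb.2)

end Schedule

namespace PathDecomp

variable {V : Type*} [DecidableEq V] {G H : SimpleGraph V} {k p α β : ℕ} {B : ℕ → Finset V}
  {S T : Finset V} (hB : PathDecomp H p B)
include hB

/-- Vertices of `S` leave the cover at their last bag and the others join it at their first bag,
both clamped to `[α, β]`; at equal bags the parity lets joining come first. -/
noncomputable def switchTime (S : Finset V) (α β : ℕ) (v : V) : ℕ :=
  if v ∈ S then 2 * min (hB.last v) β + 1 else 2 * max (hB.first v) α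

lemma switchTime_of_mem {v : V} (hv : v ∈ S) :
    hB.switchTime S α β v = 2 * min (hB.last v) β + 1 := if_pos hv

lemma switchTime_of_notMem {v : V} (hv : v ∉ S) :
    hB.switchTime S α β v = 2 * max (hB.first v) α := if_neg hv

section

variable (hα : S ⊆ B α) (hαβ : α ≤ β) (hβ : T ⊆ B β) (hβp : β < p) {P : Finset V}
  (hP : ∀ v ∈ P, ∀ w ∈ S ∪ T, w ∉ P → hB.switchTime S α β v ≤ hB.switchTime S α β w)
include hα hαβ hβ hβp hP

lemma isVC_symmDiff_of_switchTime_le (hS : IsVC G S) (hT : IsVC G T) (hST : Disjoint S T)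
    (hGH : G ≤ H) : IsVC G (symmDiff S P) := by
  have key : ∀ s τ, s ∈ S → τ ∈ T → G.Adj s τ → s ∈ symmDiff S P ∨ τ ∈ symmDiff S P := by
    intro s τ hs hτ hadj
    have hτS : τ ∉ S := disjoint_right.mp hST hτ
    by_cases hsP : s ∈ P
    · by_cases hτP : τ ∈ P
      · exact Or.inr (mem_symmDiff.mpr (Or.inr ⟨hτP, hτS⟩))
      have hκ := hP s hsP τ (mem_union_right _ hτ) hτP
      rw [hB.switchTime_of_mem hs, hB.switchTime_of_notMem hτS] at hκ
      obtain ⟨j, hj, hsj, hτj⟩ := hB.edge_bag (hGH hadj)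
      have := hB.first_le hj hτj
      have := hB.le_last hj hsj
      have := hB.le_last (hαβ.trans_lt hβp) (hα hs)
      have := hB.first_le hβp (hβ hτ)
      omega
    · exact Or.inl (mem_symmDiff.mpr (Or.inl ⟨hs, hsP⟩))
  intro u v huv
  rcases hS.adj_between hT hST huv with ⟨hu, hv⟩ | ⟨hu, hv⟩
  · exact key u v hu hv huv
  · exact (key v u hv hu huv.symm).symm

lemma exists_symmDiff_subset_of_switchTime_le (hPST : P ⊆ S ∪ T) :
    ∃ i < p, symmDiff S P ⊆ B i := by
  set i := max α (P.sup fun v => hB.switchTime S α β v / 2)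
  have hiβ : i ≤ β := by
    refine max_le hαβ (Finset.sup_le fun v hv => ?_)
    by_cases hvS : v ∈ S
    · rw [hB.switchTime_of_mem hvS]
      omega
    · have := hB.first_le hβp (hβ ((mem_union.mp (hPST hv)).resolve_left hvS))
      rw [hB.switchTime_of_notMem hvS]
      omega
  refine ⟨i, by omega, fun x hx => ?_⟩
  rcases mem_symmDiff.mp hx with ⟨hxS, hxP⟩ | ⟨hxP, hxS⟩
  · have hil : i ≤ hB.last x := by
      refine max_le (hB.le_last (hαβ.trans_lt hβp) (hα hxS)) (Finset.sup_le fun v hv => ?_)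
      have := hP v hv x (mem_union_left _ hxS) hxP
      rw [hB.switchTime_of_mem hxS] at this
      omega
    exact hB.interval x α i _ (le_max_left _ _) hil (hB.last_lt x) (hα hxS) (hB.mem_last x)
  · have hxT : x ∈ T := (mem_union.mp (hPST hxP)).resolve_left hxS
    have hfi : hB.first x ≤ i := by
      have := Finset.le_sup (f := fun v => hB.switchTime S α β v / 2) hxP
      rw [hB.switchTime_of_notMem hxS] at this
      omega
    exact hB.interval x _ i β hfi hiβ hβp (hB.mem_first x) (hβ hxT)

end

theorem exists_monotone_reconfSeq (hS : IsVC G S) (hT : IsVC G T) (hST : Disjoint S T)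
    (hGH : G ≤ H) (hw : ∀ i < p, #(B i) ≤ k) (hα : S ⊆ B α) (hαβ : α ≤ β) (hβ : T ⊆ B β)
    (hβp : β < p) : ∃ t Q, ReconfSeq G k S T t Q ∧ MonotoneSeq t Q := by
  obtain ⟨l, hl, hlST, hsorted⟩ := exists_nodup_toFinset_eq_pairwise (S ∪ T) (hB.switchTime S α β)
  refine exists_monotone_reconfSeq_of_list hST hl hlST fun i => ?_
  have hPST : (l.take i).toFinset ⊆ S ∪ T :=
    hlST ▸ fun x hx => List.mem_toFinset.mpr (List.mem_of_mem_take (List.mem_toFinset.mp hx))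
  have hP : ∀ v ∈ (l.take i).toFinset, ∀ w ∈ S ∪ T, w ∉ (l.take i).toFinset →
      hB.switchTime S α β v ≤ hB.switchTime S α β w := by
    intro v hv w hw hwP
    rw [← List.take_append_drop i l, List.pairwise_append] at hsorted
    rw [← hlST, ← List.take_append_drop i l, List.mem_toFinset, List.mem_append] at hw
    rw [List.mem_toFinset] at hv hwP
    exact hsorted.2.2 v hv w (hw.resolve_left hwP)
  obtain ⟨j, hj, hsub⟩ := hB.exists_symmDiff_subset_of_switchTime_le hα hαβ hβ hβp hP hPST
  exact ⟨hB.isVC_symmDiff_of_switchTime_le hα hαβ hβ hβp hP hS hT hST hGH,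
    (card_le_card hsub).trans (hw j hj)⟩

end PathDecomp

theorem exists_monotone_reconfSeq_of_pathDecomp {V : Type*} [DecidableEq V] {G : SimpleGraph V}
    {k p : ℕ} {S T : Finset V} {B : ℕ → Finset V} (hS : IsVC G S) (hT : IsVC G T)
    (hST : Disjoint S T) (hB : PathDecomp (cliquify (cliquify G S) T) p B)
    (hw : ∀ i < p, #(B i) ≤ k) : ∃ t Q, ReconfSeq G k S T t Q ∧ MonotoneSeq t Q := by
  rcases Nat.eq_zero_or_pos p with rfl | hp
  · have hempty : ∀ W : Finset V, W = ∅ := fun W =>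
      eq_empty_of_forall_notMem fun v _ => by obtain ⟨i, hi, -⟩ := hB.mem_bag v; omega
    obtain rfl := hempty S
    obtain rfl := hempty T
    exact ⟨0, fun _ => ∅, ⟨rfl, rfl, fun _ _ => ⟨hS, by simp⟩, by simp⟩, by simp [MonotoneSeq]⟩
  have hGH : G ≤ cliquify (cliquify G S) T := fun u v h =>
    adj_cliquify_cliquify.mpr ⟨h.ne, Or.inl h⟩
  obtain ⟨α, hαp, hα⟩ := hB.exists_superset_of_isClique hp fun u hu v hv huv =>
    adj_cliquify_cliquify.mpr ⟨huv, Or.inr (Or.inl ⟨hu, hv⟩)⟩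
  obtain ⟨β, hβp, hβ⟩ := hB.exists_superset_of_isClique hp fun u hu v hv huv =>
    adj_cliquify_cliquify.mpr ⟨huv, Or.inr (Or.inr ⟨hu, hv⟩)⟩
  rcases le_total α β with hαβ | hβα
  · exact hB.exists_monotone_reconfSeq hS hT hST hGH hw hα hαβ hβ hβp
  · have hrev : ∀ {γ}, γ < p → B (p - 1 - (p - 1 - γ)) = B γ := fun _ => by congr 1; omega
    exact hB.reverse.exists_monotone_reconfSeq hS hT hST hGH (fun i _ => hw _ (by omega))
      (hrev hαp ▸ hα) (by omega) (hrev hβp ▸ hβ) (by omega)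

theorem stmt0_general {V : Type} [Fintype V] [DecidableEq V] (G : SimpleGraph V)
    (k : ℕ) (hk : 0 < k) (S T : Finset V)
    (hS : IsVC G S) (hT : IsVC G T) (hST : Disjoint S T)
    (hSk : S.card ≤ k) :
    List.TFAE
      [ (∃ t Q, ReconfSeq G k S T t Q),
        (∃ t Q, ReconfSeq G k S T t Q ∧ MonotoneSeq t Q),
        (∃ p B, PathDecomp (cliquify (cliquify G S) T) p B ∧ ∀ i < p, (B i).card ≤ k) ] := by
  tfae_have 1 → 3 := by
    rintro ⟨t, Q, hQ⟩
    obtain ⟨n, D, hD⟩ := hQ.exists_isCrusade hT hST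
    obtain ⟨D', hD', hmono⟩ := hD.exists_monotone coverCost_union_add_inter
    exact hD'.exists_pathDecomp hS hT hST hk hSk hmono
  tfae_have 3 → 2 := fun ⟨_, _, hB, hw⟩ => exists_monotone_reconfSeq_of_pathDecomp hS hT hST hB hw
  tfae_have 2 → 1 := fun ⟨t, Q, hQ, _⟩ => ⟨t, Q, hQ⟩
  tfae_finish

/-- For a finite graph `G`, a positive integer `k`, and two
disjoint vertex covers `S`, `T` of size at most `k`, the following are
equivalent: (i) there is a reconfiguration sequence from `S` to `T` in
`R_k(G)`; (ii) there is a monotone such sequence; (iii) the graph obtained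
from `G` by cliquifying `S` and then cliquifying `T` has a path decomposition
of width at most `k - 1`. -/
theorem stmt0 {V : Type} [Fintype V] [DecidableEq V] (G : SimpleGraph V)
    (k : ℕ) (hk : 0 < k) (S T : Finset V)
    (hS : IsVC G S) (hT : IsVC G T) (hST : Disjoint S T)
    (hSk : S.card ≤ k) (hTk : T.card ≤ k) :
    List.TFAE
      [ (∃ t Q, ReconfSeq G k S T t Q),
        (∃ t Q, ReconfSeq G k S T t Q ∧ MonotoneSeq t Q),
        (∃ p B, PathDecomp (cliquify (cliquify G S) T) p B ∧ ∀ i < p, (B i).card ≤ k) ] :=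
  stmt0_general G k hk S T hS hT hST hSk
end

section
/- Let G be an n-vertex bipartite graph, S* a fixed vertex cover of G, and H the perturbation of G with respect to S*. If Q is a vertex cover of G, then f(Q) is a vertex cover of H and 2n·|Q| ≤ |f(Q)| ≤ (2n + 1)·|Q|. Moreover, if Q̂ is a vertex cover of H, then f⁻¹(Q̂) is a vertex cover of G and |f⁻¹(Q̂)| ≤ ⌊|Q̂| / (2n)⌋. -/
/-- Vertex type of the perturbation `H` of an `n`-vertex graph `G` with respect
to `S*`: each vertex `v ∈ S*` gets `2n` twin copies and each `v ∉ S*` gets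
`2n + 1` twin copies. -/
abbrev PV (V : Type) [DecidableEq V] (n : ℕ) (Sstar : Finset V) : Type :=
  {p : V × Fin (2 * n + 1) // p.1 ∈ Sstar → (p.2 : ℕ) < 2 * n}

/-- The perturbation `H` of `G` with respect to `S*`: a copy of `u` and a copy
of `v` are adjacent iff `uv` is an edge of `G` (in particular copies of the
same vertex are non-adjacent). -/
def perturb {V : Type} [DecidableEq V] (G : SimpleGraph V) (n : ℕ) (Sstar : Finset V) :
    SimpleGraph (PV V n Sstar) where
  Adj p q := G.Adj p.1.1 q.1.1
  symm := ⟨fun _ _ h => G.symm.symm _ _ h⟩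
  loopless := ⟨fun _ h => G.loopless.irrefl _ h⟩

/-- `f(v)`: the set of copies of `v` in the perturbation. -/
def fcopy {V : Type} [DecidableEq V] [Fintype V] (n : ℕ) (Sstar : Finset V) (v : V) :
    Finset (PV V n Sstar) :=
  Finset.univ.filter (fun p => p.1.1 = v)

/-- `f(X) = ⋃_{v ∈ X} f(v)`. -/
def fset {V : Type} [DecidableEq V] [Fintype V] (n : ℕ) (Sstar : Finset V) (X : Finset V) :
    Finset (PV V n Sstar) :=
  Finset.univ.filter (fun p => p.1.1 ∈ X)

/-- `f⁻¹(X̂) = {v : f(v) ⊆ X̂}`. -/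
def finv {V : Type} [DecidableEq V] [Fintype V] (n : ℕ) (Sstar : Finset V)
    (Xh : Finset (PV V n Sstar)) : Finset V :=
  Finset.univ.filter (fun v => fcopy n Sstar v ⊆ Xh)

/-
Every vertex has between `2n` and `2n + 1` copies and distinct vertices have disjoint copy sets,
so `2n·|X| ≤ |f(X)| ≤ (2n+1)·|X|`. Edges of `H` are exactly the copies of edges of `G`, so vertex
covers transfer in both directions. Since `f(f⁻¹(Q̂)) ⊆ Q̂`, we get `2n·|f⁻¹(Q̂)| ≤ |Q̂|`; in the
case `n = 0`, where `ℕ`-division by `0` gives `0`, the vertex set of `G` is empty.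
-/

section Perturbation

variable {V : Type} [DecidableEq V] [Fintype V] (n : ℕ) (Sstar : Finset V)

lemma mem_fcopy {v : V} {p : PV V n Sstar} : p ∈ fcopy n Sstar v ↔ p.1.1 = v := by
  simp [fcopy]

lemma mem_fset {X : Finset V} {p : PV V n Sstar} : p ∈ fset n Sstar X ↔ p.1.1 ∈ X := by
  simp [fset]

lemma mem_finv {Xh : Finset (PV V n Sstar)} {v : V} :
    v ∈ finv n Sstar Xh ↔ fcopy n Sstar v ⊆ Xh := by
  simp [finv]

lemma two_mul_le_card_fcopy (v : V) : 2 * n ≤ (fcopy n Sstar v).card := by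
  let copy : Fin (2 * n) → PV V n Sstar := fun i => ⟨(v, Fin.castSucc i), fun _ => i.2⟩
  have h := Finset.card_le_card_of_injOn copy (s := Finset.univ) (t := fcopy n Sstar v)
    (fun i _ => (mem_fcopy n Sstar).2 rfl)
    (fun i _ j _ hij => Fin.castSucc_injective _ (congrArg (fun p => p.1.2) hij))
  simpa using h

lemma card_fcopy_le (v : V) : (fcopy n Sstar v).card ≤ 2 * n + 1 := by
  have h := Finset.card_le_card_of_injOn (fun p : PV V n Sstar => p.1.2)
    (s := fcopy n Sstar v) (t := Finset.univ) (fun _ _ => Finset.mem_univ _)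
    (fun p hp q hq hpq => Subtype.ext (Prod.ext
      (((mem_fcopy n Sstar).1 hp).trans ((mem_fcopy n Sstar).1 hq).symm) hpq))
  simpa using h

lemma pairwiseDisjoint_fcopy (X : Set V) : X.PairwiseDisjoint (fcopy n Sstar) :=
  fun _ _ _ _ huv => Finset.disjoint_left.2 fun _ hpu hpv =>
    huv (((mem_fcopy n Sstar).1 hpu).symm.trans ((mem_fcopy n Sstar).1 hpv))

lemma card_fset (X : Finset V) :
    (fset n Sstar X).card = ∑ v ∈ X, (fcopy n Sstar v).card := by
  have hbiUnion : fset n Sstar X = X.biUnion (fcopy n Sstar) := by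
    ext p
    simp [mem_fset, mem_fcopy]
  rw [hbiUnion, Finset.card_biUnion (pairwiseDisjoint_fcopy n Sstar X)]

lemma two_mul_mul_card_le_card_fset (X : Finset V) :
    2 * n * X.card ≤ (fset n Sstar X).card := by
  rw [card_fset, mul_comm]
  simpa using Finset.card_nsmul_le_sum X _ _ fun v _ => two_mul_le_card_fcopy n Sstar v

lemma card_fset_le (X : Finset V) : (fset n Sstar X).card ≤ (2 * n + 1) * X.card := by
  rw [card_fset, mul_comm]
  simpa using Finset.sum_le_card_nsmul X _ _ fun v _ => card_fcopy_le n Sstar v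

lemma fset_finv_subset (Xh : Finset (PV V n Sstar)) : fset n Sstar (finv n Sstar Xh) ⊆ Xh :=
  fun _ hp => (mem_finv n Sstar).1 ((mem_fset n Sstar).1 hp) ((mem_fcopy n Sstar).2 rfl)

lemma card_finv_le_div (hn : Fintype.card V = n) (Xh : Finset (PV V n Sstar)) :
    (finv n Sstar Xh).card ≤ Xh.card / (2 * n) := by
  rcases Nat.eq_zero_or_pos n with rfl | hpos
  · have h := Finset.card_le_univ (finv 0 Sstar Xh)
    omega
  · rw [Nat.le_div_iff_mul_le (by omega), mul_comm]
    exact (two_mul_mul_card_le_card_fset n Sstar _).trans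
      (Finset.card_le_card (fset_finv_subset n Sstar Xh))

variable {n Sstar} {G : SimpleGraph V}

lemma IsVC.fset {Q : Finset V} (hQ : IsVC G Q) : IsVC (perturb G n Sstar) (fset n Sstar Q) :=
  fun _ _ hpq => (hQ hpq).imp (mem_fset n Sstar).2 (mem_fset n Sstar).2

lemma IsVC.finv {Qh : Finset (PV V n Sstar)} (hQh : IsVC (perturb G n Sstar) Qh) :
    IsVC G (finv n Sstar Qh) := by
  intro u v huv
  by_contra! hcover
  obtain ⟨p, hp, hpQ⟩ := Finset.not_subset.1 ((mem_finv n Sstar).not.1 hcover.1)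
  obtain ⟨q, hq, hqQ⟩ := Finset.not_subset.1 ((mem_finv n Sstar).not.1 hcover.2)
  have hpq : (perturb G n Sstar).Adj p q := by
    change G.Adj p.1.1 q.1.1
    rwa [(mem_fcopy n Sstar).1 hp, (mem_fcopy n Sstar).1 hq]
  exact (hQh hpq).elim hpQ hqQ

end Perturbation

theorem stmt4_general {V : Type} [Fintype V] [DecidableEq V] (G : SimpleGraph V)
    (n : ℕ) (hn : Fintype.card V = n)
    (Sstar : Finset V) :
    (∀ Q : Finset V, IsVC G Q →
      IsVC (perturb G n Sstar) (fset n Sstar Q) ∧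
        2 * n * Q.card ≤ (fset n Sstar Q).card ∧
        (fset n Sstar Q).card ≤ (2 * n + 1) * Q.card) ∧
    (∀ Qh : Finset (PV V n Sstar), IsVC (perturb G n Sstar) Qh →
      IsVC G (finv n Sstar Qh) ∧ (finv n Sstar Qh).card ≤ Qh.card / (2 * n)) := by
  refine ⟨fun Q hQ => ⟨hQ.fset, two_mul_mul_card_le_card_fset n Sstar Q,
    card_fset_le n Sstar Q⟩, fun Qh hQh => ⟨hQh.finv, card_finv_le_div n Sstar hn Qh⟩⟩

/-- Let `G` be an `n`-vertex bipartite graph, `S*` a vertex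
cover of `G`, and `H` the perturbation of `G` with respect to `S*`.  If `Q` is
a vertex cover of `G` then `f(Q)` is a vertex cover of `H` with
`2n·|Q| ≤ |f(Q)| ≤ (2n+1)·|Q|`; and if `Q̂` is a vertex cover of `H` then
`f⁻¹(Q̂)` is a vertex cover of `G` with `|f⁻¹(Q̂)| ≤ ⌊|Q̂| / (2n)⌋`. -/
theorem stmt4 {V : Type} [Fintype V] [DecidableEq V] (G : SimpleGraph V)
    (hbip : G.Colorable 2) (n : ℕ) (hn : Fintype.card V = n)
    (Sstar : Finset V) (hSstar : IsVC G Sstar) :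
    (∀ Q : Finset V, IsVC G Q →
      IsVC (perturb G n Sstar) (fset n Sstar Q) ∧
        2 * n * Q.card ≤ (fset n Sstar Q).card ∧
        (fset n Sstar Q).card ≤ (2 * n + 1) * Q.card) ∧
    (∀ Qh : Finset (PV V n Sstar), IsVC (perturb G n Sstar) Qh →
      IsVC G (finv n Sstar Qh) ∧ (finv n Sstar Qh).card ≤ Qh.card / (2 * n)) :=
  stmt4_general G n hn Sstar
end

section
/- Let G be a bipartite graph with bipartition (L, R), k a positive integer, and S a vertex cover of G of size at most k. Let η = η_1 · η_2 · ⋯ · η_ℓ be an edit sequence valid at S, where each η_i is a (maximal) block. If for some index i the block η_i is not winning, the block η_{i+1} is winning, and touch(η_i) ∩ touch(η_{i+1}) = ∅, then the edit sequence η' = η_1 · ⋯ · η_{i−1} · η_{i+1} · η_i · η_{i+2} · ⋯ · η_ℓ obtained by swapping η_i and η_{i+1} is also valid at S. -/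
/-- An edit marker: `(v, true)` adds the vertex `v`, `(v, false)` removes it. -/
abbrev Edit (α : Type*) := α × Bool

/-- Apply a single edit operation to a set. -/
def applyEdit {α : Type*} [DecidableEq α] (Q : Finset α) (e : Edit α) : Finset α :=
  if e.2 then insert e.1 Q else Q.erase e.1

/-- Apply an edit sequence to a set. -/
def applySeq {α : Type*} [DecidableEq α] (Q : Finset α) : List (Edit α) → Finset α
  | [] => Q
  | e :: es => applySeq (applyEdit Q e) es

/-- An edit sequence is valid at `Q`: each addition adds a vertex not already
present, each removal removes a present vertex, and every intermediate set is
a vertex cover of `G` of size at most `k`. -/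
def ValidAt {α : Type*} [DecidableEq α] (G : SimpleGraph α) (k : ℕ) :
    Finset α → List (Edit α) → Prop
  | _, [] => True
  | Q, e :: es =>
      (e.2 = true → e.1 ∉ Q) ∧ (e.2 = false → e.1 ∈ Q) ∧
      IsVC G (applyEdit Q e) ∧ (applyEdit Q e).card ≤ k ∧ ValidAt G k (applyEdit Q e) es

/-- `add(η)`: the set of vertices added by the edit sequence `η`. -/
def addSet {α : Type*} [DecidableEq α] (η : List (Edit α)) : Finset α :=
  ((η.filter (fun e => e.2)).map Prod.fst).toFinset

/-- `rem(η)`: the set of vertices removed by the edit sequence `η`. -/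
def remSet {α : Type*} [DecidableEq α] (η : List (Edit α)) : Finset α :=
  ((η.filter (fun e => !e.2)).map Prod.fst).toFinset

/-- `touch(η)`: the set of vertices touched (added or removed) by `η`. -/
def touchSet {α : Type*} [DecidableEq α] (η : List (Edit α)) : Finset α :=
  (η.map Prod.fst).toFinset
section Helpers
variable {V : Type} [DecidableEq V]

lemma touchSet_cons (e : Edit V) (l : List (Edit V)) :
    touchSet (e :: l) = insert e.1 (touchSet l) := by
  simp [touchSet]

lemma addSet_cons (e : Edit V) (l : List (Edit V)) :
    addSet (e :: l) = if e.2 then insert e.1 (addSet l) else addSet l := by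
  simp only [addSet, List.filter_cons]
  cases h : e.2 <;> simp

lemma remSet_cons (e : Edit V) (l : List (Edit V)) :
    remSet (e :: l) = if e.2 then remSet l else insert e.1 (remSet l) := by
  simp only [remSet, List.filter_cons]
  cases h : e.2 <;> simp

lemma addSet_subset_touchSet (l : List (Edit V)) : addSet l ⊆ touchSet l := by
  intro v hv
  simp only [addSet, touchSet, List.mem_toFinset, List.mem_map, List.mem_filter] at *
  obtain ⟨e, ⟨he, _⟩, rfl⟩ := hv
  exact ⟨e, he, rfl⟩

lemma remSet_subset_touchSet (l : List (Edit V)) : remSet l ⊆ touchSet l := by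
  intro v hv
  simp only [remSet, touchSet, List.mem_toFinset, List.mem_map, List.mem_filter] at *
  obtain ⟨e, ⟨he, _⟩, rfl⟩ := hv
  exact ⟨e, he, rfl⟩

lemma applySeq_append (Q : Finset V) (l₁ l₂ : List (Edit V)) :
    applySeq Q (l₁ ++ l₂) = applySeq (applySeq Q l₁) l₂ := by
  induction l₁ generalizing Q with
  | nil => rfl
  | cons e l ih => simp [applySeq, ih]

lemma validAt_append {G : SimpleGraph V} {k : ℕ} (Q : Finset V) (l₁ l₂ : List (Edit V)) :
    ValidAt G k Q (l₁ ++ l₂) ↔ ValidAt G k Q l₁ ∧ ValidAt G k (applySeq Q l₁) l₂ := by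
  induction l₁ generalizing Q with
  | nil => simp [ValidAt, applySeq]
  | cons e l ih => simp [ValidAt, applySeq, ih, and_assoc]

lemma applyEdit_comm {e f : Edit V} (h : e.1 ≠ f.1) (Q : Finset V) :
    applyEdit (applyEdit Q e) f = applyEdit (applyEdit Q f) e := by
  simp only [applyEdit]
  have h' := h.symm
  cases e.2 <;> cases f.2 <;>
    simp only [if_true, if_false, Bool.false_eq_true, ite_false, ite_true] <;> ext v <;>
    simp only [Finset.mem_insert, Finset.mem_erase] <;>
    by_cases hv : v = e.1 <;> by_cases hw : v = f.1 <;> simp_all <;> tauto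

lemma applyEdit_swap_seq {e : Edit V} {l : List (Edit V)} (h : e.1 ∉ touchSet l)
    (Q : Finset V) : applySeq (applyEdit Q e) l = applyEdit (applySeq Q l) e := by
  induction l generalizing Q with
  | nil => rfl
  | cons f l ih =>
    rw [touchSet_cons] at h
    simp only [Finset.mem_insert, not_or] at h
    simp only [applySeq]
    rw [applyEdit_comm h.1, ih h.2]

lemma applySeq_comm {l₁ l₂ : List (Edit V)} (h : Disjoint (touchSet l₁) (touchSet l₂))
    (Q : Finset V) : applySeq Q (l₁ ++ l₂) = applySeq Q (l₂ ++ l₁) := by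
  induction l₁ generalizing Q with
  | nil => simp
  | cons e l ih =>
    rw [touchSet_cons] at h
    have he : e.1 ∉ touchSet l₂ := by
      have := Finset.disjoint_left.mp h (Finset.mem_insert_self _ _); exact this
    have hl : Disjoint (touchSet l) (touchSet l₂) :=
      h.mono_left (by simp [Finset.subset_insert])
    calc applySeq Q ((e :: l) ++ l₂) = applySeq (applyEdit Q e) (l ++ l₂) := rfl
      _ = applySeq (applyEdit Q e) (l₂ ++ l) := ih hl _
      _ = applySeq (applySeq (applyEdit Q e) l₂) l := applySeq_append _ _ _
      _ = applySeq (applyEdit (applySeq Q l₂) e) l := by rw [applyEdit_swap_seq he]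
      _ = applySeq Q (l₂ ++ e :: l) := by rw [applySeq_append]; rfl

lemma mem_applySeq_nodup {l : List (Edit V)} (hnd : (l.map Prod.fst).Nodup)
    (Q : Finset V) (v : V) :
    v ∈ applySeq Q l ↔ v ∈ addSet l ∨ (v ∈ Q ∧ v ∉ remSet l) := by
  induction l generalizing Q with
  | nil => simp [applySeq, addSet, remSet]
  | cons e l ih =>
    simp only [List.map_cons, List.nodup_cons] at hnd
    have he : e.1 ∉ touchSet l := by simpa [touchSet] using hnd.1
    have hea : e.1 ∉ addSet l := fun h => he (addSet_subset_touchSet l h)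
    have her : e.1 ∉ remSet l := fun h => he (remSet_subset_touchSet l h)
    rw [applySeq, ih hnd.2, addSet_cons, remSet_cons]
    cases h : e.2 <;> simp only [applyEdit, h, if_true, if_false, Bool.false_eq_true,
      ite_false, ite_true, Finset.mem_insert, Finset.mem_erase]
    · by_cases hv : v = e.1 <;> simp [hv, hea, her] <;> tauto
    · by_cases hv : v = e.1 <;> simp [hv, hea, her] <;> tauto

lemma applySeq_eq_nodup {l : List (Edit V)} (hnd : (l.map Prod.fst).Nodup) (Q : Finset V) :
    applySeq Q l = addSet l ∪ (Q \ remSet l) := by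
  ext v
  rw [mem_applySeq_nodup hnd]
  simp [Finset.mem_union, Finset.mem_sdiff]

lemma card_union_sdiff {A Rm Q : Finset V} (hA : Disjoint A Q) (hR : Rm ⊆ Q) :
    (A ∪ (Q \ Rm)).card + Rm.card = A.card + Q.card := by
  have h1 : Disjoint A (Q \ Rm) := hA.mono_right (Finset.sdiff_subset)
  rw [Finset.card_union_of_disjoint h1, Finset.card_sdiff_of_subset hR]
  have := Finset.card_le_card hR
  omega

lemma applyEdit_union_sdiff {e : Edit V} {A Rm : Finset V} (hA : e.1 ∉ A) (hR : e.1 ∉ Rm)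
    (Q : Finset V) : applyEdit (A ∪ (Q \ Rm)) e = A ∪ (applyEdit Q e \ Rm) := by
  ext v
  simp only [applyEdit]
  cases e.2 <;> simp only [if_true, if_false, Bool.false_eq_true, ite_false, ite_true,
    Finset.mem_insert, Finset.mem_erase, Finset.mem_union, Finset.mem_sdiff] <;>
    by_cases hv : v = e.1 <;> simp [hv, hA, hR] <;> tauto

lemma applySeq_isVC {G : SimpleGraph V} {k : ℕ} {Q : Finset V} {l : List (Edit V)}
    (hv : ValidAt G k Q l) (hQ : IsVC G Q) (hQk : Q.card ≤ k) :
    IsVC G (applySeq Q l) ∧ (applySeq Q l).card ≤ k := by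
  induction l generalizing Q with
  | nil => exact ⟨hQ, hQk⟩
  | cons e l ih =>
    obtain ⟨_, _, h3, h4, h5⟩ := hv
    exact ih h5 h3 h4

lemma validAt_nodup_facts {G : SimpleGraph V} {k : ℕ} {Q : Finset V} {l : List (Edit V)}
    (hv : ValidAt G k Q l) (hnd : (l.map Prod.fst).Nodup) :
    Disjoint (addSet l) Q ∧ remSet l ⊆ Q := by
  induction l generalizing Q with
  | nil => simp [addSet, remSet]
  | cons e l ih =>
    obtain ⟨h1, h2, _, _, h5⟩ := hv
    simp only [List.map_cons, List.nodup_cons] at hnd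
    have he : e.1 ∉ touchSet l := by simpa [touchSet] using hnd.1
    have hea : e.1 ∉ addSet l := fun h => he (addSet_subset_touchSet l h)
    have her : e.1 ∉ remSet l := fun h => he (remSet_subset_touchSet l h)
    obtain ⟨ihA, ihR⟩ := ih h5 hnd.2
    rw [addSet_cons, remSet_cons]
    cases h : e.2
    · have heQ : e.1 ∈ Q := h2 h
      simp only [applyEdit, h, Bool.false_eq_true, ite_false] at ihA ihR
      simp only [Bool.false_eq_true, ite_false]
      refine ⟨Finset.disjoint_left.mpr fun a ha haQ => ?_, fun a ha => ?_⟩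
      · exact Finset.disjoint_left.mp ihA ha
          (Finset.mem_erase.mpr ⟨fun hh => hea (hh ▸ ha), haQ⟩)
      · rcases Finset.mem_insert.mp ha with rfl | ha
        · exact heQ
        · exact Finset.mem_of_mem_erase (ihR ha)
    · have heQ : e.1 ∉ Q := h1 h
      simp only [applyEdit, h, ite_true] at ihA ihR
      simp only [ite_true]
      refine ⟨Finset.disjoint_left.mpr fun a ha haQ => ?_, fun a ha => ?_⟩
      · rcases Finset.mem_insert.mp ha with rfl | ha
        · exact heQ haQ
        · exact Finset.disjoint_left.mp ihA ha (Finset.mem_insert_of_mem haQ)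
      · rcases Finset.mem_insert.mp (ihR ha) with rfl | hh
        · exact absurd ha her
        · exact hh

end Helpers

section Cons
variable {V : Type} [DecidableEq V]

lemma addSet_subset_cons (e : Edit V) (l : List (Edit V)) : addSet l ⊆ addSet (e :: l) := by
  rw [addSet_cons]; split
  · exact Finset.subset_insert _ _
  · exact subset_rfl

lemma remSet_subset_cons (e : Edit V) (l : List (Edit V)) : remSet l ⊆ remSet (e :: l) := by
  rw [remSet_cons]; split
  · exact subset_rfl
  · exact Finset.subset_insert _ _

lemma touchSet_subset_cons (e : Edit V) (l : List (Edit V)) : touchSet l ⊆ touchSet (e :: l) := by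
  rw [touchSet_cons]; exact Finset.subset_insert _ _

lemma head_mem_touchSet (e : Edit V) (l : List (Edit V)) : e.1 ∈ touchSet (e :: l) := by
  rw [touchSet_cons]; exact Finset.mem_insert_self _ _

end Cons

lemma lemB {V : Type} [DecidableEq V] (G : SimpleGraph V) (L R : Finset V)
    (hdisj : Disjoint L R)
    (hbip : ∀ ⦃u v : V⦄, G.Adj u v → (u ∈ L ∧ v ∈ R) ∨ (u ∈ R ∧ v ∈ L)) (k : ℕ) :
    ∀ (l : List (Edit V)) (Q A Rm : Finset V),
      Disjoint A Q → Rm ⊆ Q → Rm.card ≤ A.card →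
      A ⊆ R → Rm ⊆ L → addSet l ⊆ L → remSet l ⊆ R →
      Disjoint (touchSet l) (A ∪ Rm) → IsVC G Q →
      ValidAt G k (A ∪ (Q \ Rm)) l → ValidAt G k Q l := by
  intro l
  induction l with
  | nil => intros; trivial
  | cons e l ih =>
    intro Q A Rm hAQ hRQ hcard hAR hRL haddL hremR htch hQVC hv
    obtain ⟨h1, h2, h3, h4, h5⟩ := hv
    have hetch : e.1 ∉ A ∪ Rm :=
      Finset.disjoint_left.mp htch (head_mem_touchSet e l)
    have heA : e.1 ∉ A := fun h => hetch (Finset.mem_union_left _ h)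
    have heR : e.1 ∉ Rm := fun h => hetch (Finset.mem_union_right _ h)
    have hkey : applyEdit (A ∪ (Q \ Rm)) e = A ∪ (applyEdit Q e \ Rm) :=
      applyEdit_union_sdiff heA heR Q
    have p1 : e.2 = true → e.1 ∉ Q := by
      intro h heQ
      exact h1 h (Finset.mem_union_right _ (Finset.mem_sdiff.mpr ⟨heQ, heR⟩))
    have p2 : e.2 = false → e.1 ∈ Q := by
      intro h
      rcases Finset.mem_union.mp (h2 h) with h' | h'
      · exact absurd h' heA
      · exact (Finset.mem_sdiff.mp h').1
    have hAQ' : Disjoint A (applyEdit Q e) := by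
      unfold applyEdit
      split
      · exact Finset.disjoint_left.mpr fun a ha hb' => by
          rcases Finset.mem_insert.mp hb' with rfl | hq
          · exact heA ha
          · exact Finset.disjoint_left.mp hAQ ha hq
      · exact hAQ.mono_right (Finset.erase_subset _ _)
    have hRQ' : Rm ⊆ applyEdit Q e := by
      unfold applyEdit
      split
      · exact hRQ.trans (Finset.subset_insert _ _)
      · intro a ha; exact Finset.mem_erase.mpr ⟨fun hh => heR (hh ▸ ha), hRQ ha⟩
    have hVC' : IsVC G (applyEdit Q e) := by
      have claim : ∀ u v, G.Adj u v → u ∈ L → v ∈ R →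
          u ∈ applyEdit Q e ∨ v ∈ applyEdit Q e := by
        intro u v huv hu hv'
        by_contra hcon
        push_neg at hcon
        obtain ⟨hu', hv2⟩ := hcon
        have hQ1 : u ∈ A ∪ (applyEdit Q e \ Rm) ∨ v ∈ A ∪ (applyEdit Q e \ Rm) := by
          rw [← hkey]; exact h3 huv
        have hvA : v ∈ A := by
          rcases hQ1 with h' | h'
          · rcases Finset.mem_union.mp h' with h'' | h''
            · exact absurd (hAR h'') (Finset.disjoint_left.mp hdisj hu)
            · exact absurd (Finset.mem_sdiff.mp h'').1 hu'
          · rcases Finset.mem_union.mp h' with h'' | h''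
            · exact h''
            · exact absurd (Finset.mem_sdiff.mp h'').1 hv2
        cases hb : e.2
        · have heR' : e.1 ∈ R := hremR (by rw [remSet_cons, hb]; simp)
          have hune : u ≠ e.1 := fun hh => Finset.disjoint_left.mp hdisj hu (hh ▸ heR')
          have huQ : u ∉ Q := fun hh =>
            hu' (by simp [applyEdit, hb, Finset.mem_erase, hune, hh])
          have hvQ : v ∈ Q := (hQVC huv).resolve_left huQ
          have hve : v = e.1 := by
            by_contra hne
            exact hv2 (by simp [applyEdit, hb, Finset.mem_erase, hne, hvQ])
          exact heA (hve ▸ hvA)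
        · have huQ : u ∉ Q := fun hh => hu' (by simp [applyEdit, hb, hh])
          have hvQ : v ∉ Q := fun hh => hv2 (by simp [applyEdit, hb, hh])
          rcases hQVC huv with h' | h'
          · exact huQ h'
          · exact hvQ h'
      intro u v huv
      rcases hbip huv with ⟨hu, hv'⟩ | ⟨hu, hv'⟩
      · exact claim u v huv hu hv'
      · exact (claim v u huv.symm hv' hu).symm
    have hcard' : (applyEdit Q e).card ≤ k := by
      have hcu := card_union_sdiff hAQ' hRQ'
      rw [← hkey] at hcu
      omega
    refine ⟨p1, p2, hVC', hcard', ?_⟩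
    rw [hkey] at h5
    exact ih (applyEdit Q e) A Rm hAQ' hRQ' hcard hAR hRL
      ((addSet_subset_cons e l).trans haddL) ((remSet_subset_cons e l).trans hremR)
      (htch.mono_left (touchSet_subset_cons e l)) hVC' h5

lemma lemC {V : Type} [DecidableEq V] (G : SimpleGraph V) (L R : Finset V)
    (hdisj : Disjoint L R)
    (hbip : ∀ ⦃u v : V⦄, G.Adj u v → (u ∈ L ∧ v ∈ R) ∨ (u ∈ R ∧ v ∈ L)) (k : ℕ) :
    ∀ (l : List (Edit V)) (U A Rm : Finset V),
      Disjoint A U → Rm ⊆ U → A.card ≤ Rm.card →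
      A ⊆ L → Rm ⊆ R → addSet l ⊆ R → remSet l ⊆ L → (l.map Prod.fst).Nodup →
      Disjoint (touchSet l) (A ∪ Rm) →
      IsVC G (A ∪ (applySeq U l \ Rm)) →
      ValidAt G k U l → ValidAt G k (A ∪ (U \ Rm)) l := by
  intro l
  induction l with
  | nil => intros; trivial
  | cons e l ih =>
    intro U A Rm hAU hRU hcard hAL hRR haddR hremL hnd htch hW hv
    obtain ⟨h1, h2, h3, h4, h5⟩ := hv
    simp only [List.map_cons, List.nodup_cons] at hnd
    have hetch : e.1 ∉ A ∪ Rm :=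
      Finset.disjoint_left.mp htch (head_mem_touchSet e l)
    have heA : e.1 ∉ A := fun h => hetch (Finset.mem_union_left _ h)
    have heR : e.1 ∉ Rm := fun h => hetch (Finset.mem_union_right _ h)
    have hkey : applyEdit (A ∪ (U \ Rm)) e = A ∪ (applyEdit U e \ Rm) :=
      applyEdit_union_sdiff heA heR U
    have p1 : e.2 = true → e.1 ∉ A ∪ (U \ Rm) := by
      intro h hmem
      rcases Finset.mem_union.mp hmem with h' | h'
      · exact heA h'
      · exact h1 h (Finset.mem_sdiff.mp h').1
    have p2 : e.2 = false → e.1 ∈ A ∪ (U \ Rm) := fun h =>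
      Finset.mem_union_right _ (Finset.mem_sdiff.mpr ⟨h2 h, heR⟩)
    have hAU' : Disjoint A (applyEdit U e) := by
      unfold applyEdit
      split
      · exact Finset.disjoint_left.mpr fun a ha hb' => by
          rcases Finset.mem_insert.mp hb' with rfl | hq
          · exact heA ha
          · exact Finset.disjoint_left.mp hAU ha hq
      · exact hAU.mono_right (Finset.erase_subset _ _)
    have hRU' : Rm ⊆ applyEdit U e := by
      unfold applyEdit
      split
      · exact hRU.trans (Finset.subset_insert _ _)
      · intro a ha; exact Finset.mem_erase.mpr ⟨fun hh => heR (hh ▸ ha), hRU ha⟩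
    have hWl : IsVC G (A ∪ (applySeq (applyEdit U e) l \ Rm)) := hW
    have hVC' : IsVC G (A ∪ (applyEdit U e \ Rm)) := by
      have claim : ∀ u v, G.Adj u v → u ∈ L → v ∈ R →
          u ∈ A ∪ (applyEdit U e \ Rm) ∨ v ∈ A ∪ (applyEdit U e \ Rm) := by
        intro u v huv hu hv'
        by_contra hcon
        push_neg at hcon
        obtain ⟨hu', hv2⟩ := hcon
        have huA : u ∉ A := fun h => hu' (Finset.mem_union_left _ h)
        have huRm : u ∉ Rm := fun h => Finset.disjoint_left.mp hdisj hu (hRR h)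
        have huU' : u ∉ applyEdit U e := fun h =>
          hu' (Finset.mem_union_right _ (Finset.mem_sdiff.mpr ⟨h, huRm⟩))
        have hvU' : v ∈ applyEdit U e := (h3 huv).resolve_left huU'
        have hvRm : v ∈ Rm := by
          by_contra hvr
          exact hv2 (Finset.mem_union_right _ (Finset.mem_sdiff.mpr ⟨hvU', hvr⟩))
        have hvW : v ∉ A ∪ (applySeq (applyEdit U e) l \ Rm) := by
          intro h
          rcases Finset.mem_union.mp h with h' | h'
          · exact Finset.disjoint_left.mp hdisj (hAL h') hv'
          · exact (Finset.mem_sdiff.mp h').2 hvRm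
        have huW : u ∈ A ∪ (applySeq (applyEdit U e) l \ Rm) :=
          (hWl huv).resolve_right hvW
        have huSeq : u ∈ applySeq (applyEdit U e) l := by
          rcases Finset.mem_union.mp huW with h' | h'
          · exact absurd h' huA
          · exact (Finset.mem_sdiff.mp h').1
        rw [mem_applySeq_nodup hnd.2] at huSeq
        rcases huSeq with h' | h'
        · exact Finset.disjoint_left.mp hdisj hu
            (haddR ((addSet_subset_cons e l) h'))
        · exact huU' h'.1
      intro u v huv
      rcases hbip huv with ⟨hu, hv'⟩ | ⟨hu, hv'⟩
      · exact claim u v huv hu hv'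
      · exact (claim v u huv.symm hv' hu).symm
    have hcard' : (A ∪ (applyEdit U e \ Rm)).card ≤ k := by
      have hcu := card_union_sdiff hAU' hRU'
      omega
    refine ⟨p1, p2, by rw [hkey]; exact hVC', by rw [hkey]; exact hcard', ?_⟩
    rw [hkey]
    exact ih (applyEdit U e) A Rm hAU' hRU' hcard hAL hRR
      ((addSet_subset_cons e l).trans haddR) ((remSet_subset_cons e l).trans hremL)
      hnd.2 (htch.mono_left (touchSet_subset_cons e l)) hWl h5

/-- Let `G` be bipartite with bipartition `(L, R)` and let
`η = pre ++ b₁ ++ b₂ ++ post` be an edit sequence valid at a vertex cover `S`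
of size at most `k`, where `b₁` and `b₂` are consecutive (maximal) blocks of
opposite types (each touching no vertex more than once).  If `b₁` is not
winning, `b₂` is winning, and `touch(b₁) ∩ touch(b₂) = ∅`, then the sequence
obtained by swapping `b₁` and `b₂` is also valid at `S`. -/
theorem stmt10 {V : Type} [DecidableEq V] (G : SimpleGraph V) (L R : Finset V)
    (hcover : ∀ v : V, v ∈ L ∨ v ∈ R) (hdisj : Disjoint L R)
    (hbip : ∀ ⦃u v : V⦄, G.Adj u v → (u ∈ L ∧ v ∈ R) ∨ (u ∈ R ∧ v ∈ L))
    (k : ℕ) (hk : 0 < k) (S : Finset V) (hS : IsVC G S) (hSk : S.card ≤ k)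
    (pre b₁ b₂ post : List (Edit V))
    (hvalid : ValidAt G k S (pre ++ b₁ ++ b₂ ++ post))
    (hblocks :
      (addSet b₁ ⊆ R ∧ remSet b₁ ⊆ L ∧ addSet b₂ ⊆ L ∧ remSet b₂ ⊆ R) ∨
      (addSet b₁ ⊆ L ∧ remSet b₁ ⊆ R ∧ addSet b₂ ⊆ R ∧ remSet b₂ ⊆ L))
    (hb₁once : (b₁.map Prod.fst).Nodup) (hb₂once : (b₂.map Prod.fst).Nodup)
    (hnotwin : ¬ (addSet b₁).card < (remSet b₁).card)
    (hwin : (addSet b₂).card < (remSet b₂).card)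
    (htouch : Disjoint (touchSet b₁) (touchSet b₂)) :
    ValidAt G k S (pre ++ b₂ ++ b₁ ++ post) := by
  -- decompose validity
  simp only [List.append_assoc] at hvalid ⊢
  rw [validAt_append] at hvalid ⊢
  obtain ⟨hpre, hrest⟩ := hvalid
  refine ⟨hpre, ?_⟩
  set Q : Finset V := applySeq S pre with hQdef
  rw [validAt_append] at hrest ⊢
  obtain ⟨hb1, hrest⟩ := hrest
  rw [validAt_append] at hrest
  obtain ⟨hb2, hpost⟩ := hrest
  have hQfacts := applySeq_isVC hpre hS hSk
  have hQ1facts := applySeq_isVC hb1 hQfacts.1 hQfacts.2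
  have hQ2facts := applySeq_isVC hb2 hQ1facts.1 hQ1facts.2
  obtain ⟨hA1Q, hR1Q⟩ := validAt_nodup_facts hb1 hb₁once
  obtain ⟨hA2Q1, hR2Q1⟩ := validAt_nodup_facts hb2 hb₂once
  have hQ1eq : applySeq Q b₁ = addSet b₁ ∪ (Q \ remSet b₁) := applySeq_eq_nodup hb₁once Q
  have htch' : ∀ x ∈ touchSet b₂, x ∉ touchSet b₁ := fun x hx h =>
    Finset.disjoint_left.mp htouch h hx
  have hA2Q : Disjoint (addSet b₂) Q := by
    rw [Finset.disjoint_left]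
    intro a ha haQ
    have haQ1 : a ∈ applySeq Q b₁ := by
      rw [mem_applySeq_nodup hb₁once]
      exact Or.inr ⟨haQ, fun h =>
        htch' a (addSet_subset_touchSet _ ha) (remSet_subset_touchSet _ h)⟩
    exact Finset.disjoint_left.mp hA2Q1 ha haQ1
  have hR2Q : remSet b₂ ⊆ Q := by
    intro a ha
    have hmem := hR2Q1 ha
    rw [mem_applySeq_nodup hb₁once] at hmem
    rcases hmem with h | h
    · exact absurd (addSet_subset_touchSet _ h)
        (htch' a (remSet_subset_touchSet _ ha))
    · exact h.1
  obtain ⟨L', R', hdisj', hbip', hbA1, hbR1, hbA2, hbR2⟩ :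
      ∃ L' R' : Finset V, Disjoint L' R' ∧
        (∀ ⦃u v : V⦄, G.Adj u v → (u ∈ L' ∧ v ∈ R') ∨ (u ∈ R' ∧ v ∈ L')) ∧
        addSet b₁ ⊆ R' ∧ remSet b₁ ⊆ L' ∧ addSet b₂ ⊆ L' ∧ remSet b₂ ⊆ R' := by
    rcases hblocks with ⟨h1, h2, h3, h4⟩ | ⟨h1, h2, h3, h4⟩
    · exact ⟨L, R, hdisj, hbip, h1, h2, h3, h4⟩
    · exact ⟨R, L, hdisj.symm, fun u v h => (hbip h).symm, h1, h2, h3, h4⟩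
  have hd21 : Disjoint (touchSet b₂) (addSet b₁ ∪ remSet b₁) := by
    rw [Finset.disjoint_left]
    intro a ha hmem
    rcases Finset.mem_union.mp hmem with h | h
    · exact htch' a ha (addSet_subset_touchSet _ h)
    · exact htch' a ha (remSet_subset_touchSet _ h)
  have hd12 : Disjoint (touchSet b₁) (addSet b₂ ∪ remSet b₂) := by
    rw [Finset.disjoint_left]
    intro a ha hmem
    rcases Finset.mem_union.mp hmem with h | h
    · exact Finset.disjoint_left.mp htouch ha (addSet_subset_touchSet _ h)
    · exact Finset.disjoint_left.mp htouch ha (remSet_subset_touchSet _ h)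
  have hvb2 : ValidAt G k Q b₂ := by
    refine lemB G L' R' hdisj' hbip' k b₂ Q (addSet b₁) (remSet b₁) hA1Q hR1Q
      (Nat.le_of_not_lt hnotwin) hbA1 hbR1 hbA2 hbR2 hd21 hQfacts.1 ?_
    rw [← hQ1eq]
    exact hb2
  refine ⟨hvb2, ?_⟩
  rw [validAt_append]
  constructor
  · have heq2 : applySeq Q b₂ = addSet b₂ ∪ (Q \ remSet b₂) := applySeq_eq_nodup hb₂once Q
    rw [heq2]
    refine lemC G L' R' hdisj' hbip' k b₁ Q (addSet b₂) (remSet b₂) hA2Q hR2Q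
      (Nat.le_of_lt hwin) hbA2 hbR2 hbA1 hbR1 hb₁once hd12 ?_ hb1
    have heq3 : addSet b₂ ∪ (applySeq Q b₁ \ remSet b₂) = applySeq (applySeq Q b₁) b₂ :=
      (applySeq_eq_nodup hb₂once _).symm
    rw [heq3]
    exact hQ2facts.1
  · have hcomm : applySeq (applySeq Q b₂) b₁ = applySeq (applySeq Q b₁) b₂ := by
      rw [← applySeq_append Q b₂ b₁, ← applySeq_append Q b₁ b₂,
        applySeq_comm htouch.symm Q]
    rw [hcomm]
    exact hpost
end

section
/- Let Σ = {σ_1, …, σ_s} be a finite alphabet, A ⊆ Σ × Σ a binary relation, and n an even positive integer. Then the graph G = G(Σ, A, n) of the token-sliding construction is bipartite; specifically, L = X_1 ∪ X_3 ∪ ⋯ ∪ X_{n−1} ∪ {e^i : i even} ∪ {z_1} and R = X_2 ∪ X_4 ∪ ⋯ ∪ X_n ∪ {o^i : i odd} ∪ {z_2}, extended appropriately into each cage, form a bipartition of G. -/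
open scoped Classical
noncomputable section

/-- The internal edges of a cage, between the vertices `f_1, …, f_8`
(0-indexed): the three internally vertex-disjoint paths
`f_1–f_2–f_3–f_4`, `f_1–f_5–f_6–f_4` and `f_1–f_7–f_8–f_4`. -/
def cageFF : List (Fin 8 × Fin 8) :=
  [(0, 1), (1, 2), (2, 3), (0, 4), (4, 5), (5, 3), (0, 6), (6, 7), (7, 3)]

/-- The cage vertices adjacent to `h₁`: `f_1, f_3, f_6, f_8` (0-indexed). -/
def cageH1 : List (Fin 8) := [0, 2, 5, 7]

/-- The cage vertices adjacent to `h₂`: `f_2, f_4, f_5, f_7` (0-indexed). -/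
def cageH2 : List (Fin 8) := [1, 3, 4, 6]

/-- Adding a cage between `h₁ c` and `h₂ c` for every `c : ι`. -/
def addCages {V ι : Type*} (B : SimpleGraph V) (h₁ h₂ : ι → V) :
    SimpleGraph (V ⊕ ι × Fin 8) :=
  SimpleGraph.fromRel (fun a b =>
    match a, b with
    | Sum.inl u, Sum.inl v => B.Adj u v
    | Sum.inl u, Sum.inr (c, j) => (u = h₁ c ∧ j ∈ cageH1) ∨ (u = h₂ c ∧ j ∈ cageH2)
    | Sum.inr _, Sum.inl _ => False
    | Sum.inr (c, j), Sum.inr (c', j') => c = c' ∧ (j, j') ∈ cageFF)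

/-- The base vertices of the construction `G(Σ, A, n)`:
`Sum.inl (i, σ)` is the vertex `x^{i+1}_σ` (positions are `1`-based in the
paper, so `i : Fin n` encodes position `i + 1`); `Sum.inr (Sum.inl i)` is the
vertex `o^{i+1}` (if `i + 1` is odd) resp. `e^{i+1}` (if `i + 1` is even); and
`Sum.inr (Sum.inr 0)`, `Sum.inr (Sum.inr 1)` are the vertices `z_1`, `z_2`. -/
abbrev BaseV (Sig : Type) (n : ℕ) : Type := (Fin n × Sig) ⊕ (Fin n ⊕ Fin 2)

/-- The index type for the cages of the construction: `Sum.inl` indexes the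
cage between `x^i_j` and `x^{i+1}_{j'}` for `(σ_j, σ_{j'}) ∉ A`; `Sum.inr i`
indexes the cage between `z_1` and `o^{i+1}` (for `i + 1` odd), resp. between
`z_2` and `e^{i+1}` (for `i + 1` even). -/
abbrev CageIdx (Sig : Type) [DecidableEq Sig] (A : Finset (Sig × Sig)) (n : ℕ) : Type :=
  {q : (Fin n × Fin n) × Sig × Sig //
      (q.1.2 : ℕ) = (q.1.1 : ℕ) + 1 ∧ (q.2.1, q.2.2) ∉ A} ⊕ Fin n

/-- The base graph: `o^i` (resp. `e^i`) is adjacent to every vertex of `X_i`,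
and `z_1` is adjacent to `z_2`. -/
def baseGraph (Sig : Type) (n : ℕ) : SimpleGraph (BaseV Sig n) :=
  SimpleGraph.fromRel (fun a b =>
    match a, b with
    | Sum.inl (i, _), Sum.inr (Sum.inl i') => i = i'
    | Sum.inr (Sum.inr a), Sum.inr (Sum.inr b) => a ≠ b
    | _, _ => False)

variable (Sig : Type) [Fintype Sig] [DecidableEq Sig] (A : Finset (Sig × Sig)) (n : ℕ)

/-- The first endpoint (`h_1`) of each cage. -/
def cageH1v : CageIdx Sig A n → BaseV Sig n
  | Sum.inl q => Sum.inl (q.1.1.1, q.1.2.1)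
  | Sum.inr i => Sum.inr (Sum.inr (if Odd ((i : ℕ) + 1) then 0 else 1))

/-- The second endpoint (`h_2`) of each cage. -/
def cageH2v : CageIdx Sig A n → BaseV Sig n
  | Sum.inl q => Sum.inl (q.1.1.2, q.1.2.2)
  | Sum.inr i => Sum.inr (Sum.inl i)

/-- The full vertex set of the construction `G(Σ, A, n)`. -/
abbrev FullV : Type := BaseV Sig n ⊕ CageIdx Sig A n × Fin 8

/-- The graph `G(Σ, A, n)` of the token-sliding construction. -/
def tsGraph : SimpleGraph (FullV Sig A n) :=
  addCages (baseGraph Sig n) (cageH1v Sig A n) (cageH2v Sig A n)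

/-- `m = |Σ × Σ ∖ A|`. -/
def tsM : ℕ := ((Finset.univ : Finset (Sig × Sig)) \ A).card

/-- The token count `k = n + 1 + 3(m(n−1) + n)`. -/
def tsK : ℕ := n + 1 + 3 * (tsM Sig A * (n - 1) + n)

/-- `I` is an independent set of `G`. -/
def IsIndep {α : Type*} (G : SimpleGraph α) (I : Finset α) : Prop :=
  ∀ u ∈ I, ∀ v ∈ I, ¬ G.Adj u v

/-- An independent set `I` of `G(Σ, A, n)` of size exactly `k` is
well-formed if: exactly one of its tokens (the switch token) is on `z_1` or
`z_2`; for each `i`, exactly one token (the `Σ_i`-token) is on a vertex of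
`X_i ∪ {o^i}` (for `i` odd) resp. `X_i ∪ {e^i}` (for `i` even); and each
extended cage (including its two endpoints) carries exactly three tokens. -/
def WellFormed (I : Finset (FullV Sig A n)) : Prop :=
  IsIndep (tsGraph Sig A n) I ∧
  I.card = tsK Sig A n ∧
  (I.filter (fun w => w = Sum.inl (Sum.inr (Sum.inr 0)) ∨
      w = Sum.inl (Sum.inr (Sum.inr 1)))).card = 1 ∧
  (∀ i : Fin n,
    (I.filter (fun w => (∃ σ : Sig, w = Sum.inl (Sum.inl (i, σ))) ∨
        w = Sum.inl (Sum.inr (Sum.inl i)))).card = 1) ∧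
  (∀ c : CageIdx Sig A n,
    (I.filter (fun w => w = Sum.inl (cageH1v Sig A n c) ∨ w = Sum.inl (cageH2v Sig A n c) ∨
        ∃ j : Fin 8, w = Sum.inr (c, j))).card = 3)

/-- `I` is strictly well-formed: well-formed, with every `Σ_i`-token on a
vertex of `X_i` (not on `o^i` or `e^i`). -/
def StrictWellFormed (I : Finset (FullV Sig A n)) : Prop :=
  WellFormed Sig A n I ∧ ∀ i : Fin n, Sum.inl (Sum.inr (Sum.inl i)) ∉ I

/-- The side `L` of the bipartition on the base vertices:
`L = X_1 ∪ X_3 ∪ ⋯ ∪ X_{n−1} ∪ {e^i : i even} ∪ {z_1}` (positions are encoded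
`0`-based, so `i : Fin n` is position `i + 1`). -/
def baseInL : BaseV Sig n → Prop
  | Sum.inl (i, _) => Odd ((i : ℕ) + 1)
  | Sum.inr (Sum.inl i) => Even ((i : ℕ) + 1)
  | Sum.inr (Sum.inr j) => j = 0

/-- The full coloring: extend `baseInL` into the cages. -/
def fullInL (Sig : Type) [Fintype Sig] [DecidableEq Sig] (A : Finset (Sig × Sig)) (n : ℕ) :
    FullV Sig A n → Prop
  | Sum.inl a => baseInL Sig n a
  | Sum.inr (c, j) => baseInL Sig n (cageH1v Sig A n c) ↔ j ∈ cageH2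

section aux
variable {Sig : Type} [Fintype Sig] [DecidableEq Sig] {A : Finset (Sig × Sig)} {n : ℕ}

lemma endpoints_opp (c : CageIdx Sig A n) :
    baseInL Sig n (cageH1v Sig A n c) ↔ ¬ baseInL Sig n (cageH2v Sig A n c) := by
  cases c with
  | inl q =>
      obtain ⟨⟨⟨i1, i2⟩, σ1, σ2⟩, h, -⟩ := q
      simp only at h
      simp only [cageH1v, cageH2v, baseInL]
      rw [Nat.odd_iff, Nat.odd_iff, h]
      omega
  | inr i =>
      by_cases h : Odd ((i : ℕ) + 1) <;>
        simp [cageH1v, cageH2v, baseInL, h, ← Nat.not_odd_iff_even]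

lemma ff_opp {j j' : Fin 8} (h : (j, j') ∈ cageFF) : (j ∈ cageH2) ↔ ¬ (j' ∈ cageH2) := by
  revert j j' h; decide

lemma h1_not_h2 {j : Fin 8} (h : j ∈ cageH1) : j ∉ cageH2 := by revert j h; decide

lemma base_rel_opp {a b : BaseV Sig n}
    (h : match a, b with
      | Sum.inl (i, _), Sum.inr (Sum.inl i') => i = i'
      | Sum.inr (Sum.inr a), Sum.inr (Sum.inr b) => a ≠ b
      | _, _ => False) :
    baseInL Sig n a ↔ ¬ baseInL Sig n b := by
  match a, b with
  | Sum.inl (i, σ), Sum.inr (Sum.inl i') =>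
      simp only at h; subst h
      simp [baseInL, ← Nat.not_odd_iff_even]
  | Sum.inr (Sum.inr x), Sum.inr (Sum.inr y) =>
      simp only at h
      fin_cases x <;> fin_cases y <;>
        first
          | exact absurd rfl h
          | (simp only [baseInL]; decide)

lemma base_adj_opp {u v : BaseV Sig n} (h : (baseGraph Sig n).Adj u v) :
    baseInL Sig n u ↔ ¬ baseInL Sig n v := by
  rw [baseGraph, SimpleGraph.fromRel_adj] at h
  obtain ⟨-, h | h⟩ := h
  · exact base_rel_opp h
  · have := base_rel_opp (Sig := Sig) (n := n) (a := v) (b := u) h; tauto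

lemma hf_opp {u : BaseV Sig n} {c : CageIdx Sig A n} {j : Fin 8}
    (h : (u = cageH1v Sig A n c ∧ j ∈ cageH1) ∨ (u = cageH2v Sig A n c ∧ j ∈ cageH2)) :
    baseInL Sig n u ↔ ¬ (baseInL Sig n (cageH1v Sig A n c) ↔ j ∈ cageH2) := by
  have hop := endpoints_opp c
  rcases h with ⟨rfl, hj⟩ | ⟨rfl, hj⟩
  · have := h1_not_h2 hj
    tauto
  · tauto

lemma adj_opp {a b : FullV Sig A n} (h : (tsGraph Sig A n).Adj a b) :
    fullInL Sig A n a ↔ ¬ fullInL Sig A n b := by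
  rw [tsGraph, addCages, SimpleGraph.fromRel_adj] at h
  obtain ⟨-, h⟩ := h
  rcases a with u | ⟨c, j⟩ <;> rcases b with v | ⟨c', j'⟩ <;>
    simp only [fullInL] at *
  · rcases h with h | h
    · exact base_adj_opp h
    · have := base_adj_opp h; tauto
  · rcases h with h | h
    · exact hf_opp h
    · exact absurd h (by simp)
  · rcases h with h | h
    · exact absurd h (by simp)
    · have := hf_opp h; tauto
  · rcases h with ⟨rfl, hff⟩ | ⟨rfl, hff⟩
    · have := ff_opp hff; tauto
    · have := ff_opp hff; tauto

end aux

/-- The graph `G(Σ, A, n)` of the token-sliding construction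
is bipartite; specifically, `L = X_1 ∪ X_3 ∪ ⋯ ∪ X_{n−1} ∪ {e^i : i even} ∪ {z_1}`
and `R = X_2 ∪ X_4 ∪ ⋯ ∪ X_n ∪ {o^i : i odd} ∪ {z_2}`, extended appropriately
into each cage, form a bipartition of `G`. -/
theorem stmt14 (Sig : Type) [Fintype Sig] [DecidableEq Sig] (A : Finset (Sig × Sig))
    (n : ℕ) (hn : Even n) (hn0 : 0 < n) :
    ∃ L' R' : Set (FullV Sig A n),
      (∀ w : FullV Sig A n, w ∈ L' ∨ w ∈ R') ∧ Disjoint L' R' ∧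
      (∀ ⦃a b : FullV Sig A n⦄, (tsGraph Sig A n).Adj a b → ¬(a ∈ L' ∧ b ∈ L')) ∧
      (∀ ⦃a b : FullV Sig A n⦄, (tsGraph Sig A n).Adj a b → ¬(a ∈ R' ∧ b ∈ R')) ∧
      (∀ a : BaseV Sig n, Sum.inl a ∈ L' ↔ baseInL Sig n a) ∧
      (∀ a : BaseV Sig n, Sum.inl a ∈ R' ↔ ¬ baseInL Sig n a) := by
  refine ⟨{w | fullInL Sig A n w}, {w | ¬ fullInL Sig A n w}, fun w => ?_, ?_, ?_, ?_, ?_, ?_⟩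
  · exact em _
  · exact Set.disjoint_left.mpr fun w hw hw' => hw' hw
  · intro a b hab ⟨ha, hb⟩
    exact ((adj_opp hab).mp ha) hb
  · intro a b hab ⟨ha, hb⟩
    exact hb (((adj_opp hab).not_left).mp ha)
  · intro a; simp [fullInL]
  · intro a; simp [fullInL]
end
end

section
/- Let G = G(Σ, A, n) be the token-sliding construction graph with token count k = n + 1 + 3(m(n−1) + n), where m = |Σ × Σ ∖ A|. If I is a well-formed independent set of G, then there is no cage added between vertices u and v of G such that both u ∈ I and v ∈ I. -/
open scoped Classical
noncomputable section

variable (Sig : Type) [Fintype Sig] [DecidableEq Sig] (A : Finset (Sig × Sig)) (n : ℕ)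

/-- If `I` is a well-formed independent set of
`G(Σ, A, n)`, then for no cage do both of its endpoints carry a token of `I`. -/
theorem stmt15 (Sig : Type) [Fintype Sig] [DecidableEq Sig] (A : Finset (Sig × Sig))
    (n : ℕ) (hn : Even n) (hn0 : 0 < n)
    (I : Finset (FullV Sig A n)) (hI : WellFormed Sig A n I) :
    ∀ c : CageIdx Sig A n,
      ¬ (Sum.inl (cageH1v Sig A n c) ∈ I ∧ Sum.inl (cageH2v Sig A n c) ∈ I) := by
  rintro c ⟨h1m, h2m⟩
  have hf : ∀ j : Fin 8, Sum.inr (c, j) ∉ I := by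
    intro j hj
    have hcov : j ∈ cageH1 ∨ j ∈ cageH2 := by fin_cases j <;> decide
    rcases hcov with h | h
    · exact hI.1 _ h1m _ hj (by
        simp only [tsGraph, addCages, SimpleGraph.fromRel_adj]
        exact ⟨by simp, Or.inl (Or.inl ⟨trivial, h⟩)⟩)
    · exact hI.1 _ h2m _ hj (by
        simp only [tsGraph, addCages, SimpleGraph.fromRel_adj]
        exact ⟨by simp, Or.inl (Or.inr ⟨trivial, h⟩)⟩)
  have hcard := hI.2.2.2.2 c
  have hsub : I.filter (fun w => w = Sum.inl (cageH1v Sig A n c) ∨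
      w = Sum.inl (cageH2v Sig A n c) ∨ ∃ j : Fin 8, w = Sum.inr (c, j)) ⊆
      {Sum.inl (cageH1v Sig A n c), Sum.inl (cageH2v Sig A n c)} := by
    intro w hw
    rcases Finset.mem_filter.mp hw with ⟨hwI, h | h | ⟨j, h⟩⟩
    · simp [h]
    · simp [h]
    · exact absurd hwI (h ▸ hf j)
  have hle := Finset.card_le_card hsub
  have h2 : ({Sum.inl (cageH1v Sig A n c), Sum.inl (cageH2v Sig A n c)} :
      Finset (FullV Sig A n)).card ≤ 2 := Finset.card_insert_le _ _ |>.trans (by simp)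
  omega
end
end

section
/- Let G = G(Σ, A, n) be the token-sliding construction graph with token count k = n + 1 + 3(m(n−1) + n), where m = |Σ × Σ ∖ A|. If I is a strictly well-formed independent set of G whose Σ_i-tokens are on the vertices x^1_{j_1}, x^2_{j_2}, …, x^n_{j_n}, then the string w_I = σ_{j_1} σ_{j_2} ⋯ σ_{j_n} is a word, i.e., (σ_{j_i}, σ_{j_{i+1}}) ∈ A for all 1 ≤ i < n. -/
open scoped Classical
noncomputable section

variable (Sig : Type) [Fintype Sig] [DecidableEq Sig] (A : Finset (Sig × Sig)) (n : ℕ)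

/-- If `I` is a strictly well-formed independent set of
`G(Σ, A, n)` whose `Σ_i`-tokens sit on the vertices `x^i_{w i}` (for a symbol
assignment `w : Fin n → Σ`), then `w` is a word: every two consecutive symbols
of `w` are in the relation `A`. -/
theorem stmt16 (Sig : Type) [Fintype Sig] [DecidableEq Sig] (A : Finset (Sig × Sig))
    (n : ℕ) (hn : Even n) (hn0 : 0 < n)
    (I : Finset (FullV Sig A n)) (hI : StrictWellFormed Sig A n I)
    (w : Fin n → Sig)
    (hw : ∀ i : Fin n, Sum.inl (Sum.inl (i, w i)) ∈ I) :
    ∀ i i' : Fin n, (i' : ℕ) = (i : ℕ) + 1 → (w i, w i') ∈ A := by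
  intro i i' hii'
  by_contra hA
  obtain ⟨⟨hind, _, _, _, hcage⟩, _⟩ := hI
  set c : CageIdx Sig A n := Sum.inl ⟨((i, i'), (w i, w i')), ⟨hii', hA⟩⟩ with hc
  have h3 := hcage c
  set P : FullV Sig A n → Prop := fun v => v = Sum.inl (cageH1v Sig A n c) ∨
      v = Sum.inl (cageH2v Sig A n c) ∨ ∃ j : Fin 8, v = Sum.inr (c, j) with hP
  set u : FullV Sig A n := Sum.inl (Sum.inl (i, w i)) with hu
  set v : FullV Sig A n := Sum.inl (Sum.inl (i', w i')) with hv
  have hcu : Sum.inl (cageH1v Sig A n c) = u := rfl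
  have hcv : Sum.inl (cageH2v Sig A n c) = v := rfl
  have huv : u ≠ v := by
    simp only [hu, hv]
    intro h
    have h2 : i = i' := by
      injection h with h; injection h with h; exact congrArg Prod.fst h
    have : (i : ℕ) = (i' : ℕ) := congrArg Fin.val h2
    omega
  have huF : u ∈ I.filter P := by
    refine Finset.mem_filter.2 ⟨hw i, Or.inl hcu.symm⟩
  have hvF : v ∈ I.filter P := by
    refine Finset.mem_filter.2 ⟨hw i', Or.inr (Or.inl hcv.symm)⟩
  -- there is a third element
  have hex : ∃ x ∈ I.filter P, x ≠ u ∧ x ≠ v := by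
    by_contra hno
    push_neg at hno
    have hsub : I.filter P ⊆ {u, v} := by
      intro x hx
      rcases em (x = u) with h | h
      · simp [h]
      · simp [hno x hx h]
    have hle := Finset.card_le_card hsub
    have h2 : ({u, v} : Finset (FullV Sig A n)).card ≤ 2 :=
      Finset.card_insert_le _ _ |>.trans (by simp)
    have h3' : (I.filter P).card = 3 := h3
    omega
  obtain ⟨x, hxF, hxu, hxv⟩ := hex
  obtain ⟨hxI, hxP⟩ := Finset.mem_filter.1 hxF
  rcases hxP with h | h | ⟨j, hj⟩
  · exact hxu (h.trans hcu)
  · exact hxv (h.trans hcv)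
  subst hj
  -- adjacency contradiction
  have hjmem : j ∈ cageH1 ∨ j ∈ cageH2 := by
    fin_cases j <;> simp [cageH1, cageH2]
  rcases hjmem with hj1 | hj2
  · have hadj : (tsGraph Sig A n).Adj u (Sum.inr (c, j)) := by
      refine SimpleGraph.fromRel_adj .. |>.2 ⟨by simp, Or.inl ?_⟩
      exact Or.inl ⟨rfl, hj1⟩
    exact hind u (hw i) _ hxI hadj
  · have hadj : (tsGraph Sig A n).Adj v (Sum.inr (c, j)) := by
      refine SimpleGraph.fromRel_adj .. |>.2 ⟨by simp, Or.inl ?_⟩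
      exact Or.inr ⟨rfl, hj2⟩
    exact hind v (hw i') _ hxI hadj
end
end
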